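/- arXiv:2308.09994 — 5 statements merged into one kernel-verified Lean document; each statement's English description precedes it below -/
import Mathlib

section
/- Let P be Hermitian positive semi-definite of rank r with thin spectral decomposition P = V_r Λ_r V_r* (Λ_r positive diagonal), and let D be an invertible matrix such that D*D commutes with V_rV_r*. Then the Moore–Penrose pseudoinverse satisfies the reverse order law (D P^{1/2})⁺ = (P^{1/2})⁺ D^{-1}. -/
open Matrix
open scoped ComplexOrder

/-- The spectral norm (operator 2-norm) of a complex matrix. -/
noncomputable def specNorm {m n : Type*} [Fintype m] [Fintype n] [DecidableEq n]
    (A : Matrix m n ℂ) : ℝ :=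
  ‖LinearMap.toContinuousLinearMap (Matrix.toEuclideanLin A)‖

/-- `B` is the Moore–Penrose pseudoinverse of `A` (the four Penrose conditions). -/
def IsMP {m n : Type*} [Fintype m] [Fintype n]
    (A : Matrix m n ℂ) (B : Matrix n m ℂ) : Prop :=
  A * B * A = A ∧ B * A * B = B ∧ (A * B)ᴴ = A * B ∧ (B * A)ᴴ = B * A

/-- Uniqueness of the Moore-Penrose pseudoinverse. -/
lemma IsMP_unique {m n : Type*} [Fintype m] [Fintype n]
    (A : Matrix m n ℂ) (X Y : Matrix n m ℂ) (hX : IsMP A X) (hY : IsMP A Y) :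
    X = Y := by
  obtain ⟨hX1, hX2, hX3, hX4⟩ := hX
  obtain ⟨hY1, hY2, hY3, hY4⟩ := hY
  have hAX : A * X = A * Y := by
    have h1 : Aᴴ = Aᴴ * (A * Y) := by
      conv_lhs => rw [← hY1]
      rw [Matrix.conjTranspose_mul, hY3]
    calc A * X = (A * X)ᴴ := hX3.symm
      _ = Xᴴ * Aᴴ := by rw [Matrix.conjTranspose_mul]
      _ = Xᴴ * (Aᴴ * (A * Y)) := by rw [← h1]
      _ = (Xᴴ * Aᴴ) * (A * Y) := by simp only [Matrix.mul_assoc]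
      _ = (A * X)ᴴ * (A * Y) := by rw [Matrix.conjTranspose_mul]
      _ = (A * X) * (A * Y) := by rw [hX3]
      _ = ((A * X) * A) * Y := by simp only [Matrix.mul_assoc]
      _ = A * Y := by rw [hX1]
  have hXA : X * A = Y * A := by
    have h1 : Aᴴ = (Y * A) * Aᴴ := by
      conv_lhs => rw [← hY1]
      rw [Matrix.mul_assoc, Matrix.conjTranspose_mul, hY4]
    calc X * A = (X * A)ᴴ := hX4.symm
      _ = Aᴴ * Xᴴ := by rw [Matrix.conjTranspose_mul]
      _ = ((Y * A) * Aᴴ) * Xᴴ := by rw [← h1]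
      _ = (Y * A) * (Aᴴ * Xᴴ) := by simp only [Matrix.mul_assoc]
      _ = (Y * A) * (X * A)ᴴ := by rw [Matrix.conjTranspose_mul]
      _ = (Y * A) * (X * A) := by rw [hX4]
      _ = Y * ((A * X) * A) := by simp only [Matrix.mul_assoc]
      _ = Y * A := by rw [hX1]
  calc X = X * A * X := hX2.symm
    _ = X * (A * Y) := by rw [Matrix.mul_assoc, hAX]
    _ = (X * A) * Y := by simp only [Matrix.mul_assoc]
    _ = Y * A * Y := by rw [hXA]
    _ = Y := hY2

/-- `P` positive semi-definite of rank `r` with thin spectral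
decomposition `P = V_r Λ_r V_rᴴ` (`Λ_r` positive diagonal, `V_rᴴV_r = 1`), and `D`
invertible with `DᴴD` commuting with `V_rV_rᴴ`.  Then the pseudoinverse satisfies
the reverse order law `(D P^{1/2})⁺ = (P^{1/2})⁺ D⁻¹`, where
`P^{1/2} = V_r Λ_r^{1/2} V_rᴴ`. -/
theorem stmt9 (n r : ℕ)
    (P D Dinv S B C : Matrix (Fin n) (Fin n) ℂ)
    (Vr : Matrix (Fin n) (Fin r) ℂ)
    (lam : Fin r → ℝ) (hlam : ∀ i, 0 < lam i)
    (hVr : Vrᴴ * Vr = 1)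
    (hP : P = Vr * Matrix.diagonal (fun i => (lam i : ℂ)) * Vrᴴ)
    (hD : D * Dinv = 1) (hD' : Dinv * D = 1)
    (hcomm : (Dᴴ * D) * (Vr * Vrᴴ) = (Vr * Vrᴴ) * (Dᴴ * D))
    (hS : S = Vr * Matrix.diagonal (fun i => ((Real.sqrt (lam i) : ℝ) : ℂ)) * Vrᴴ)
    (hB : IsMP S B) (hC : IsMP (D * S) C) :
    C = B * Dinv := by
  set Q : Matrix (Fin n) (Fin n) ℂ := Vr * Vrᴴ with hQ
  -- product of two "sandwiched diagonal" matrices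
  have key : ∀ d e : Fin r → ℂ,
      (Vr * Matrix.diagonal d * Vrᴴ) * (Vr * Matrix.diagonal e * Vrᴴ)
        = Vr * Matrix.diagonal (fun i => d i * e i) * Vrᴴ := by
    intro d e
    rw [← Matrix.diagonal_mul_diagonal]
    calc (Vr * Matrix.diagonal d * Vrᴴ) * (Vr * Matrix.diagonal e * Vrᴴ)
        = Vr * (Matrix.diagonal d * ((Vrᴴ * Vr) * (Matrix.diagonal e * Vrᴴ))) := by
          simp only [Matrix.mul_assoc]
      _ = Vr * (Matrix.diagonal d * (Matrix.diagonal e * Vrᴴ)) := by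
          rw [hVr, Matrix.one_mul]
      _ = Vr * (Matrix.diagonal d * Matrix.diagonal e) * Vrᴴ := by
          simp only [Matrix.mul_assoc]
  have hQ1 : Q = Vr * Matrix.diagonal (fun _ : Fin r => (1 : ℂ)) * Vrᴴ := by
    rw [Matrix.diagonal_one, Matrix.mul_one]
  -- the explicit pseudoinverse of S
  set E : Matrix (Fin n) (Fin n) ℂ :=
    Vr * Matrix.diagonal (fun i => ((Real.sqrt (lam i))⁻¹ : ℂ)) * Vrᴴ with hE
  have hone : (fun i : Fin r => ((Real.sqrt (lam i) : ℝ) : ℂ) * ((Real.sqrt (lam i))⁻¹ : ℂ))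
      = fun _ => 1 := by
    funext i
    have h0 : Real.sqrt (lam i) ≠ 0 := ne_of_gt (Real.sqrt_pos.mpr (hlam i))
    field_simp
  have hone' : (fun i : Fin r => ((Real.sqrt (lam i))⁻¹ : ℂ) * ((Real.sqrt (lam i) : ℝ) : ℂ))
      = fun _ => 1 := by
    funext i
    have h0 : Real.sqrt (lam i) ≠ 0 := ne_of_gt (Real.sqrt_pos.mpr (hlam i))
    field_simp
  have hSE : S * E = Q := by
    rw [hS, hE, key, hone, Matrix.diagonal_one, Matrix.mul_one]
  have hES : E * S = Q := by
    rw [hS, hE, key, hone', Matrix.diagonal_one, Matrix.mul_one]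
  have hQS : Q * S = S := by
    rw [hQ1, hS, key]; simp
  have hSQ : S * Q = S := by
    rw [hQ1, hS, key]; simp
  have hQE : Q * E = E := by
    rw [hQ1, hE, key]; simp
  have hEQ : E * Q = E := by
    rw [hQ1, hE, key]; simp
  have hQH : Qᴴ = Q := by
    rw [hQ, Matrix.conjTranspose_mul, Matrix.conjTranspose_conjTranspose]
  have hME : IsMP S E := by
    refine ⟨?_, ?_, ?_, ?_⟩
    · rw [hSE, hQS]
    · rw [hES, hQE]
    · rw [hSE, hQH]
    · rw [hES, hQH]
  have hBE : B = E := IsMP_unique S B E hB hME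
  have hSB : S * B = Q := by rw [hBE, hSE]
  have hBS : B * S = Q := by rw [hBE, hES]
  -- D Q Dinv is Hermitian
  have hherm : (D * Q * Dinv)ᴴ = D * Q * Dinv := by
    have h1 : (D * Q * Dinv)ᴴ = Dinvᴴ * Q * Dᴴ := by
      rw [hQ]; simp [Matrix.conjTranspose_mul, Matrix.mul_assoc]
    have h2 : Dinvᴴ * Q * Dᴴ = Dinvᴴ * Q * Dᴴ * (D * Dinv) := by rw [hD, Matrix.mul_one]
    have h3 : Dinvᴴ * Q * Dᴴ * (D * Dinv) = Dinvᴴ * (Q * (Dᴴ * D)) * Dinv := by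
      simp only [Matrix.mul_assoc]
    have h4 : Dinvᴴ * (Q * (Dᴴ * D)) * Dinv = Dinvᴴ * ((Dᴴ * D) * Q) * Dinv := by
      rw [hQ, ← hcomm]
    have h5 : Dinvᴴ * ((Dᴴ * D) * Q) * Dinv = (Dinvᴴ * Dᴴ) * (D * Q * Dinv) := by
      simp only [Matrix.mul_assoc]
    have h6 : Dinvᴴ * Dᴴ = 1 := by
      rw [← Matrix.conjTranspose_mul, hD, Matrix.conjTranspose_one]
    rw [h1, h2, h3, h4, h5, h6, Matrix.one_mul]
  -- B * Dinv satisfies the Penrose conditions for D * S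
  have hMC : IsMP (D * S) (B * Dinv) := by
    refine ⟨?_, ?_, ?_, ?_⟩
    · have h1 : D * S * (B * Dinv) * (D * S)
          = D * ((S * B) * ((Dinv * D) * S)) := by simp only [Matrix.mul_assoc]
      rw [h1, hD', Matrix.one_mul, hSB, hQS]
    · have h1 : B * Dinv * (D * S) * (B * Dinv)
          = B * ((Dinv * D) * ((S * B) * Dinv)) := by simp only [Matrix.mul_assoc]
      rw [h1, hD', Matrix.one_mul, hSB, ← Matrix.mul_assoc, hBE, hEQ]
    · have h1 : D * S * (B * Dinv) = D * Q * Dinv := by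
        rw [Matrix.mul_assoc, ← Matrix.mul_assoc S, hSB, ← Matrix.mul_assoc]
      rw [h1, hherm]
    · have h1 : B * Dinv * (D * S) = B * S := by
        rw [Matrix.mul_assoc, ← Matrix.mul_assoc Dinv, hD', Matrix.one_mul]
      rw [h1, hBS, hQH]
  exact IsMP_unique (D * S) C (B * Dinv) hC hMC
end

section
/- Let Ã = DAD* be positive semi-definite of rank s ≤ n with eigenvalues λ₁ ≥ ⋯ ≥ λ_s, λ_{s+1} = ⋯ = λ_n = 0, and Ã+Ẽ positive semi-definite with Ẽ = DED*, E Hermitian. Let A be positive semi-definite of rank r with eigenvector matrix V, and suppose D is invertible with D*D V_rV_r* = V_rV_r* D*D. Set k = ‖(A^{1/2})⁺ E (A^{1/2})⁺‖₂. Then for every i ∈ {1,…,s}: λ_{n-s+i}(Ã+Ẽ) ≤ λ_i + k|λ_i| and λ_i(Ã+Ẽ) ≥ λ_i − k|λ_i|. -/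
open Matrix
open scoped ComplexOrder

section Aux

variable {n : ℕ}

lemma stmt10_isMP_unique {A B C : Matrix (Fin n) (Fin n) ℂ}
    (hB : IsMP A B) (hC : IsMP A C) : B = C := by
  obtain ⟨h1, h2, h3, h4⟩ := hB
  obtain ⟨g1, g2, g3, g4⟩ := hC
  have hA' : Aᴴ * Cᴴ * Aᴴ = Aᴴ := by
    have := congrArg conjTranspose g1
    simpa [conjTranspose_mul, mul_assoc] using this
  have hab : A * B = A * C := by
    calc A * B = (A * B)ᴴ := h3.symm
      _ = Bᴴ * Aᴴ := by rw [conjTranspose_mul]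
      _ = Bᴴ * (Aᴴ * Cᴴ * Aᴴ) := by rw [hA']
      _ = (Bᴴ * Aᴴ) * (Cᴴ * Aᴴ) := by simp only [mul_assoc]
      _ = (A * B)ᴴ * (A * C)ᴴ := by rw [conjTranspose_mul, conjTranspose_mul]
      _ = (A * B) * (A * C) := by rw [h3, g3]
      _ = (A * B * A) * C := by simp only [mul_assoc]
      _ = A * C := by rw [h1]
  have hba : B * A = C * A := by
    calc B * A = (B * A)ᴴ := h4.symm
      _ = Aᴴ * Bᴴ := by rw [conjTranspose_mul]
      _ = (Aᴴ * Cᴴ * Aᴴ) * Bᴴ := by rw [hA']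
      _ = (Aᴴ * Cᴴ) * (Aᴴ * Bᴴ) := by simp only [mul_assoc]
      _ = (C * A)ᴴ * (B * A)ᴴ := by rw [conjTranspose_mul, conjTranspose_mul]
      _ = (C * A) * (B * A) := by rw [h4, g4]
      _ = C * (A * B * A) := by simp only [mul_assoc]
      _ = C * A := by rw [h1]
  calc B = B * A * B := h2.symm
    _ = C * A * B := by rw [hba]
    _ = C * (A * B) := by simp only [mul_assoc]
    _ = C * (A * C) := by rw [hab]
    _ = C * A * C := by simp only [mul_assoc]
    _ = C := g2

lemma stmt10_qf_eval (W : Matrix (Fin n) (Fin n) ℂ) (μ : Fin n → ℝ) (x : Fin n → ℂ) :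
    star x ⬝ᵥ ((W * diagonal (fun j => (μ j : ℂ)) * Wᴴ) *ᵥ x)
      = ((∑ j, μ j * Complex.normSq ((Wᴴ *ᵥ x) j) : ℝ) : ℂ) := by
  set c := Wᴴ *ᵥ x with hc
  have h1 : (W * diagonal (fun j => (μ j : ℂ)) * Wᴴ) *ᵥ x
      = W *ᵥ (diagonal (fun j => (μ j : ℂ)) *ᵥ c) := by
    rw [hc, mulVec_mulVec, mulVec_mulVec, Matrix.mul_assoc]
  rw [h1, dotProduct_mulVec]
  have h2 : star x ᵥ* W = star c := by
    rw [hc, star_mulVec, conjTranspose_conjTranspose]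
  rw [h2]
  have h3 : ∀ j, (diagonal (fun j => (μ j : ℂ)) *ᵥ c) j = (μ j : ℂ) * c j := by
    intro j; simp [mulVec_diagonal]
  simp only [dotProduct, h3, Pi.star_apply]
  push_cast
  congr 1; ext j
  simp only [Complex.normSq_eq_conj_mul_self, RCLike.star_def]; ring

lemma stmt10_dot_star_self (z : Fin n → ℂ) :
    star z ⬝ᵥ z = ((∑ j, Complex.normSq (z j) : ℝ) : ℂ) := by
  simp only [dotProduct, Pi.star_apply]
  push_cast
  congr 1; ext j
  simp only [Complex.normSq_eq_conj_mul_self, RCLike.star_def]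

lemma stmt10_qf_abs_le (K : Matrix (Fin n) (Fin n) ℂ) (z : Fin n → ℂ) :
    ‖star z ⬝ᵥ (K *ᵥ z)‖ ≤ specNorm K * (∑ j, Complex.normSq (z j)) := by
  set z' : EuclideanSpace ℂ (Fin n) := (WithLp.equiv 2 (Fin n → ℂ)).symm z with hz'
  have h1 : (inner ℂ z' ((LinearMap.toContinuousLinearMap (Matrix.toEuclideanLin K)) z') : ℂ)
      = star z ⬝ᵥ (K *ᵥ z) := by
    rw [LinearMap.coe_toContinuousLinearMap']
    rw [Matrix.toEuclideanLin_apply]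
    simp only [PiLp.inner_apply]
    simp [hz', dotProduct, RCLike.inner_apply, mul_comm]
  have h2 : ‖z'‖ ^ 2 = ∑ j, Complex.normSq (z j) := by
    rw [EuclideanSpace.norm_eq]
    rw [Real.sq_sqrt (by positivity)]
    congr 1; ext j
    rw [show z' j = z j from rfl, ← Complex.sq_norm]
  calc ‖star z ⬝ᵥ (K *ᵥ z)‖
      = ‖(inner ℂ z' ((LinearMap.toContinuousLinearMap (Matrix.toEuclideanLin K)) z') : ℂ)‖ := by
        rw [h1]
    _ ≤ ‖z'‖ * ‖(LinearMap.toContinuousLinearMap (Matrix.toEuclideanLin K)) z'‖ :=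
        norm_inner_le_norm _ _
    _ ≤ ‖z'‖ * (specNorm K * ‖z'‖) := by
        gcongr
        exact (LinearMap.toContinuousLinearMap (Matrix.toEuclideanLin K)).le_opNorm z'
    _ = specNorm K * ‖z'‖ ^ 2 := by ring
    _ = _ := by rw [h2]

lemma stmt10_exists_constrained (W W' : Matrix (Fin n) (Fin n) ℂ) (p q : Fin n → Prop)
    [DecidablePred p] [DecidablePred q]
    (hcard : Fintype.card {j // p j} + Fintype.card {j // q j} < n) :
    ∃ x : Fin n → ℂ, x ≠ 0 ∧ (∀ j, p j → (Wᴴ *ᵥ x) j = 0) ∧ (∀ j, q j → (W'ᴴ *ᵥ x) j = 0) := by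
  let L : (Fin n → ℂ) →ₗ[ℂ] ({j // p j} → ℂ) × ({j // q j} → ℂ) :=
    { toFun := fun x => (fun j => (Wᴴ *ᵥ x) j.1, fun j => (W'ᴴ *ᵥ x) j.1)
      map_add' := by intro x y; ext j <;> simp [mulVec_add]
      map_smul' := by intro c x; ext j <;> simp [mulVec_smul] }
  have hni : ¬ Function.Injective L := by
    intro hinj
    have := LinearMap.finrank_le_finrank_of_injective hinj
    rw [Module.finrank_pi, Module.finrank_prod, Module.finrank_pi, Module.finrank_pi] at this
    simp at this
    omega
  rw [Function.not_injective_iff] at hni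
  obtain ⟨x, y, hxy, hne⟩ := hni
  have hz : L (x - y) = 0 := by rw [map_sub, hxy, sub_self]
  refine ⟨x - y, sub_ne_zero.mpr hne, ?_, ?_⟩
  · intro j hj
    have h2 := congrArg (fun v => v.1 ⟨j, hj⟩) hz
    simpa [L, mulVec_sub] using h2
  · intro j hj
    have h2 := congrArg (fun v => v.2 ⟨j, hj⟩) hz
    simpa [L, mulVec_sub] using h2

lemma stmt10_card_lt (m : ℕ) (hm : m ≤ n) :
    Fintype.card {j : Fin n // (j : ℕ) < m} = m :=
  Fintype.card_of_bijective (f := fun j : {j : Fin n // (j : ℕ) < m} => (⟨j.1.1, j.2⟩ : Fin m))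
    ⟨fun a b hab => by
      rcases a with ⟨⟨a, ha⟩, ha'⟩; rcases b with ⟨⟨b, hb⟩, hb'⟩
      have := congrArg Fin.val hab
      simp only at this
      simp [this],
     fun j => ⟨⟨⟨j.1, lt_of_lt_of_le j.2 hm⟩, j.2⟩, rfl⟩⟩ |>.trans (Fintype.card_fin m)

lemma stmt10_card_ge (m : ℕ) (hm : m ≤ n) :
    Fintype.card {j : Fin n // m ≤ (j : ℕ)} = n - m := by
  have h := Fintype.card_subtype_compl (fun j : Fin n => (j : ℕ) < m)
  have he : Fintype.card {j : Fin n // m ≤ (j : ℕ)}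
      = Fintype.card {j : Fin n // ¬ (j : ℕ) < m} := by
    apply Fintype.card_congr
    exact Equiv.subtypeEquivRight (by intro j; omega)
  rw [he, h, stmt10_card_lt m hm, Fintype.card_fin]

lemma stmt10_card_interval (m M : ℕ) (hM : M ≤ n) (hm : m ≤ M) :
    Fintype.card {j : Fin n // m ≤ (j : ℕ) ∧ (j : ℕ) < M} = M - m :=
  Fintype.card_of_bijective
    (f := fun j : {j : Fin n // m ≤ (j : ℕ) ∧ (j : ℕ) < M} =>
      (⟨j.1.1 - m, by omega⟩ : Fin (M - m)))
    ⟨fun a b hab => by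
      rcases a with ⟨⟨a, ha⟩, ha1, ha2⟩; rcases b with ⟨⟨b, hb⟩, hb1, hb2⟩
      have h2 := congrArg Fin.val hab
      simp only [Fin.val_mk] at h2 ha1 ha2 hb1 hb2
      simp only [Subtype.mk.injEq, Fin.mk.injEq]
      omega,
     fun j => by
      refine ⟨⟨⟨j.1 + m, by omega⟩, by simp, by
        have := j.2; simp only [Fin.val_mk]; omega⟩, ?_⟩
      simp [Fin.ext_iff]⟩ |>.trans (Fintype.card_fin (M - m))

lemma stmt10_sum_sq_pos (x : Fin n → ℂ) (hx : x ≠ 0) :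
    0 < ∑ j, Complex.normSq (x j) := by
  obtain ⟨j, hj⟩ : ∃ j, x j ≠ 0 := by
    by_contra h
    push_neg at h
    exact hx (funext h)
  exact Finset.sum_pos' (fun j _ => Complex.normSq_nonneg _)
    ⟨j, Finset.mem_univ j, Complex.normSq_pos.mpr hj⟩

end Aux

set_option maxHeartbeats 1000000 in
/-- Corollary 3.1.1.  `Ã = DADᴴ` positive semi-definite of rank
`s ≤ n` with eigenvalues `lam` (nonzero decreasing, then zeros), `Ẽ = DEDᴴ`,
`Ã + Ẽ` positive semi-definite with eigenvalues `mu` in decreasing order, `E`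
Hermitian.  `A` is positive semi-definite of rank `r` with unitary eigenvector
matrix `V` (eigenvalues `a`, nonzero ones first), `D` invertible with `DᴴD`
commuting with `V_rV_rᴴ`, and `k = ‖(A^{1/2})⁺ E (A^{1/2})⁺‖₂`.  Then for `i < s`:
`λ_{n-s+i}(Ã+Ẽ) ≤ λ_i + k|λ_i|` and `λ_i(Ã+Ẽ) ≥ λ_i - k|λ_i|`. -/
theorem stmt10 (n r s : ℕ) (hr : r ≤ n) (hs : s ≤ n)
    (A E D Dinv V W₁ W₂ B : Matrix (Fin n) (Fin n) ℂ)
    (a lam mu : Fin n → ℝ)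
    (hE : E.IsHermitian)
    (hA : A.PosSemidef)
    (hV : V ∈ Matrix.unitaryGroup (Fin n) ℂ)
    (hAeig : A = V * Matrix.diagonal (fun i => (a i : ℂ)) * Vᴴ)
    (hapos : ∀ i : Fin n, (i : ℕ) < r → 0 < a i)
    (haz : ∀ i : Fin n, r ≤ (i : ℕ) → a i = 0)
    (hD : D * Dinv = 1) (hD' : Dinv * D = 1)
    (hcomm :
      (Dᴴ * D) * (V * Matrix.diagonal (fun i : Fin n => if (i : ℕ) < r then (1 : ℂ) else 0) * Vᴴ) =
      (V * Matrix.diagonal (fun i : Fin n => if (i : ℕ) < r then (1 : ℂ) else 0) * Vᴴ) * (Dᴴ * D))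
    (hAt : (D * A * Dᴴ).PosSemidef)
    (hW₁ : W₁ ∈ Matrix.unitaryGroup (Fin n) ℂ)
    (hAteig : D * A * Dᴴ = W₁ * Matrix.diagonal (fun i => (lam i : ℂ)) * W₁ᴴ)
    (hlord : ∀ i j : Fin n, i ≤ j → (j : ℕ) < s → lam j ≤ lam i)
    (hlnz : ∀ i : Fin n, (i : ℕ) < s → lam i ≠ 0)
    (hlz : ∀ i : Fin n, s ≤ (i : ℕ) → lam i = 0)
    (hAtEt : (D * A * Dᴴ + D * E * Dᴴ).PosSemidef)
    (hW₂ : W₂ ∈ Matrix.unitaryGroup (Fin n) ℂ)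
    (hAtEteig : D * A * Dᴴ + D * E * Dᴴ = W₂ * Matrix.diagonal (fun i => (mu i : ℂ)) * W₂ᴴ)
    (hmu : Antitone mu)
    (hB : IsMP (V * Matrix.diagonal (fun i => ((Real.sqrt (a i) : ℝ) : ℂ)) * Vᴴ) B) :
    ∀ i : Fin n, ∀ hi : (i : ℕ) < s,
      mu ⟨n - s + (i : ℕ), by omega⟩ ≤ lam i + specNorm (B * E * B) * |lam i| ∧
      mu i ≥ lam i - specNorm (B * E * B) * |lam i| := by
  -- unitary facts
  have hV1 : Vᴴ * V = 1 := by
    rw [← Matrix.star_eq_conjTranspose]; exact Matrix.mem_unitaryGroup_iff'.mp hV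
  have hW11 : W₁ᴴ * W₁ = 1 := by
    rw [← Matrix.star_eq_conjTranspose]; exact Matrix.mem_unitaryGroup_iff'.mp hW₁
  have hW12 : W₁ * W₁ᴴ = 1 := by
    rw [← Matrix.star_eq_conjTranspose]; exact Matrix.mem_unitaryGroup_iff.mp hW₁
  have hW21 : W₂ᴴ * W₂ = 1 := by
    rw [← Matrix.star_eq_conjTranspose]; exact Matrix.mem_unitaryGroup_iff'.mp hW₂
  have hW22 : W₂ * W₂ᴴ = 1 := by
    rw [← Matrix.star_eq_conjTranspose]; exact Matrix.mem_unitaryGroup_iff.mp hW₂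
  have hmulV : ∀ f g : Fin n → ℂ,
      (V * diagonal f * Vᴴ) * (V * diagonal g * Vᴴ) = V * diagonal (fun i => f i * g i) * Vᴴ := by
    intro f g
    calc (V * diagonal f * Vᴴ) * (V * diagonal g * Vᴴ)
        = V * diagonal f * (Vᴴ * V) * diagonal g * Vᴴ := by simp only [Matrix.mul_assoc]
      _ = V * (diagonal f * diagonal g) * Vᴴ := by
          rw [hV1]; simp only [Matrix.mul_assoc, Matrix.mul_one]
      _ = V * diagonal (fun i => f i * g i) * Vᴴ := by rw [diagonal_mul_diagonal]
  have hVco : ∀ f : Fin n → ℂ, (∀ i, star (f i) = f i) →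
      (V * diagonal f * Vᴴ)ᴴ = V * diagonal f * Vᴴ := by
    intro f hf
    simp only [conjTranspose_mul, diagonal_conjTranspose, conjTranspose_conjTranspose]
    have : star f = f := funext hf
    rw [this, Matrix.mul_assoc]
  set sa : Fin n → ℂ := fun i => ((Real.sqrt (a i) : ℝ) : ℂ) with hsadef
  set bb : Fin n → ℂ := fun i => if (i : ℕ) < r then (((Real.sqrt (a i))⁻¹ : ℝ) : ℂ) else 0
    with hbbdef
  set ind : Fin n → ℂ := fun i => if (i : ℕ) < r then (1 : ℂ) else 0 with hinddef
  have hanonneg : ∀ j : Fin n, 0 ≤ a j := by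
    intro j
    rcases lt_or_ge (j : ℕ) r with h | h
    · exact (hapos j h).le
    · rw [haz j h]
  have hsann : ∀ j : Fin n, (j : ℕ) < r → Real.sqrt (a j) ≠ 0 := by
    intro j h
    exact ne_of_gt (Real.sqrt_pos.mpr (hapos j h))
  -- key diagonal computations
  have hsabb : (fun i => sa i * bb i) = ind := by
    funext j
    simp only [hsadef, hbbdef, hinddef]
    by_cases h : (j : ℕ) < r
    · simp only [if_pos h]
      rw [← Complex.ofReal_mul, mul_inv_cancel₀ (hsann j h)]
      norm_num
    · simp only [if_neg h, mul_zero]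
  have hbbsa : (fun i => bb i * sa i) = ind := by
    funext j
    have := congrFun hsabb j
    rw [mul_comm]; exact this
  have hindsa : (fun i => ind i * sa i) = sa := by
    funext j
    simp only [hinddef, hsadef]
    by_cases h : (j : ℕ) < r
    · simp [if_pos h]
    · simp only [if_neg h, zero_mul]
      rw [haz j (le_of_not_gt h)]
      simp
  have hsaind : (fun i => sa i * ind i) = sa := by
    funext j
    have := congrFun hindsa j
    rw [mul_comm]; exact this
  have hindbb : (fun i => ind i * bb i) = bb := by
    funext j
    simp only [hinddef, hbbdef]
    by_cases h : (j : ℕ) < r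
    · simp [if_pos h]
    · simp [if_neg h]
  have hinda : (fun i => ind i * (a i : ℂ)) = fun i => (a i : ℂ) := by
    funext j
    simp only [hinddef]
    by_cases h : (j : ℕ) < r
    · simp [if_pos h]
    · simp only [if_neg h, zero_mul]
      rw [haz j (le_of_not_gt h)]
      simp
  have hsasa : (fun i => sa i * sa i) = fun i => (a i : ℂ) := by
    funext j
    simp only [hsadef]
    rw [← Complex.ofReal_mul, Real.mul_self_sqrt (hanonneg j)]
  -- names
  set H : Matrix (Fin n) (Fin n) ℂ := V * diagonal sa * Vᴴ with hHdef
  set P : Matrix (Fin n) (Fin n) ℂ := V * diagonal ind * Vᴴ with hPdef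
  set B₀ : Matrix (Fin n) (Fin n) ℂ := V * diagonal bb * Vᴴ with hB0def
  have hHB : H * B₀ = P := by rw [hHdef, hB0def, hmulV, hsabb]
  have hBH : B₀ * H = P := by rw [hHdef, hB0def, hmulV, hbbsa]
  have hPco : Pᴴ = P := by
    rw [hPdef]
    apply hVco
    intro j
    simp only [hinddef]
    by_cases h : (j : ℕ) < r <;> simp [h]
  have hHco : Hᴴ = H := by
    rw [hHdef]
    apply hVco
    intro j
    simp only [hsadef, RCLike.star_def, Complex.conj_ofReal]
  have hHH : H * H = A := by rw [hHdef, hmulV, hsasa, ← hAeig]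
  have hPA : P * A = A := by
    rw [hPdef, hAeig, hmulV, hinda]
  have hPH : P * H = H := by rw [hPdef, hHdef, hmulV, hindsa]
  have hPB0 : P * B₀ = B₀ := by rw [hPdef, hB0def, hmulV, hindbb]
  have hB0MP : IsMP H B₀ := by
    refine ⟨?_, ?_, ?_, ?_⟩
    · rw [hHB, hPH]
    · rw [hBH, hPB0]
    · rw [hHB, hPco]
    · rw [hBH, hPco]
  have hBB0 : B = B₀ := stmt10_isMP_unique hB hB0MP
  have hPDA : P * (Dᴴ * (D * A * Dᴴ)) = Dᴴ * (D * A * Dᴴ) := by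
    calc P * (Dᴴ * (D * A * Dᴴ))
        = (P * (Dᴴ * D)) * (A * Dᴴ) := by simp only [Matrix.mul_assoc]
      _ = ((Dᴴ * D) * P) * (A * Dᴴ) := by rw [← hcomm]
      _ = (Dᴴ * D) * ((P * A) * Dᴴ) := by simp only [Matrix.mul_assoc]
      _ = Dᴴ * (D * A * Dᴴ) := by rw [hPA]; simp only [Matrix.mul_assoc]
  have hHKH : H * ((B * E * B) * H) = P * (E * P) := by
    rw [hBB0]
    calc H * ((B₀ * E * B₀) * H)
        = (H * B₀) * (E * (B₀ * H)) := by simp only [Matrix.mul_assoc]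
      _ = P * (E * P) := by rw [hHB, hBH]
  -- membership lemma
  have hmem : ∀ x : Fin n → ℂ, (∀ j : Fin n, s ≤ (j : ℕ) → (W₁ᴴ *ᵥ x) j = 0) →
      P *ᵥ (Dᴴ *ᵥ x) = Dᴴ *ᵥ x := by
    intro x hx
    set c := W₁ᴴ *ᵥ x with hcdef
    have hx1 : W₁ *ᵥ c = x := by rw [hcdef, mulVec_mulVec, hW12, one_mulVec]
    set c' : Fin n → ℂ := fun j => ((lam j : ℂ))⁻¹ * c j with hc'def
    have hdc : (diagonal (fun i => (lam i : ℂ)) *ᵥ c') = c := by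
      funext j
      rw [mulVec_diagonal]
      by_cases h : (j : ℕ) < s
      · have hlj : (lam j : ℂ) ≠ 0 := Complex.ofReal_ne_zero.mpr (hlnz j h)
        rw [hc'def]
        field_simp
      · rw [hc'def]
        simp only
        rw [hx j (le_of_not_gt h)]
        ring
    have hAy : (D * A * Dᴴ) *ᵥ (W₁ *ᵥ c') = x := by
      rw [hAteig]
      rw [mulVec_mulVec]
      have h5 : (W₁ * diagonal (fun i => (lam i : ℂ)) * W₁ᴴ) * W₁
          = W₁ * diagonal (fun i => (lam i : ℂ)) := by
        calc (W₁ * diagonal (fun i => (lam i : ℂ)) * W₁ᴴ) * W₁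
            = W₁ * diagonal (fun i => (lam i : ℂ)) * (W₁ᴴ * W₁) := by
              simp only [Matrix.mul_assoc]
          _ = W₁ * diagonal (fun i => (lam i : ℂ)) := by rw [hW11, Matrix.mul_one]
      rw [h5, ← mulVec_mulVec, hdc, hx1]
    have e1 : Dᴴ *ᵥ ((D * A * Dᴴ) *ᵥ (W₁ *ᵥ c')) = (Dᴴ * (D * A * Dᴴ)) *ᵥ (W₁ *ᵥ c') :=
      mulVec_mulVec _ _ _
    have e2 : P *ᵥ ((Dᴴ * (D * A * Dᴴ)) *ᵥ (W₁ *ᵥ c'))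
        = (P * (Dᴴ * (D * A * Dᴴ))) *ᵥ (W₁ *ᵥ c') := mulVec_mulVec _ _ _
    calc P *ᵥ (Dᴴ *ᵥ x)
        = P *ᵥ (Dᴴ *ᵥ ((D * A * Dᴴ) *ᵥ (W₁ *ᵥ c'))) := by rw [hAy]
      _ = (P * (Dᴴ * (D * A * Dᴴ))) *ᵥ (W₁ *ᵥ c') := by rw [e1, e2]
      _ = (Dᴴ * (D * A * Dᴴ)) *ᵥ (W₁ *ᵥ c') := by rw [hPDA]
      _ = Dᴴ *ᵥ ((D * A * Dᴴ) *ᵥ (W₁ *ᵥ c')) := (mulVec_mulVec _ _ _).symm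
      _ = Dᴴ *ᵥ x := by rw [hAy]
  -- the key quadratic-form comparison
  have key : ∀ x : Fin n → ℂ, (∀ j : Fin n, s ≤ (j : ℕ) → (W₁ᴴ *ᵥ x) j = 0) →
      |(∑ j, mu j * Complex.normSq ((W₂ᴴ *ᵥ x) j))
          - ∑ j, lam j * Complex.normSq ((W₁ᴴ *ᵥ x) j)|
        ≤ specNorm (B * E * B) * ∑ j, lam j * Complex.normSq ((W₁ᴴ *ᵥ x) j) := by
    intro x hx
    set u := Dᴴ *ᵥ x with hudef
    set z := H *ᵥ u with hzdef
    set RA := ∑ j, lam j * Complex.normSq ((W₁ᴴ *ᵥ x) j) with hRAdef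
    set RM := ∑ j, mu j * Complex.normSq ((W₂ᴴ *ᵥ x) j) with hRMdef
    have hPu : P *ᵥ u = u := hmem x hx
    have hqfA : star x ⬝ᵥ ((D * A * Dᴴ) *ᵥ x) = (RA : ℂ) := by
      rw [hAteig, stmt10_qf_eval W₁ lam x]
    have hqfM : star x ⬝ᵥ ((D * A * Dᴴ + D * E * Dᴴ) *ᵥ x) = (RM : ℂ) := by
      rw [hAtEteig, stmt10_qf_eval W₂ mu x]
    have hstaru : star u = star x ᵥ* D := by
      rw [hudef, star_mulVec, conjTranspose_conjTranspose]
    have hsplitE : star x ⬝ᵥ ((D * E * Dᴴ) *ᵥ x) = star u ⬝ᵥ (E *ᵥ u) := by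
      rw [show (D * E * Dᴴ) *ᵥ x = D *ᵥ (E *ᵥ u) from by
        rw [hudef, mulVec_mulVec, mulVec_mulVec, Matrix.mul_assoc]]
      rw [dotProduct_mulVec, ← hstaru]
    have hsplit : (RM : ℂ) = (RA : ℂ) + star u ⬝ᵥ (E *ᵥ u) := by
      rw [← hqfM, ← hqfA, ← hsplitE, add_mulVec, dotProduct_add]
    have hstarz : star z = star u ᵥ* H := by rw [hzdef, star_mulVec, hHco]
    have hEz : star u ⬝ᵥ (E *ᵥ u) = star z ⬝ᵥ ((B * E * B) *ᵥ z) := by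
      have h1 : (B * E * B) *ᵥ z = ((B * E * B) * H) *ᵥ u := mulVec_mulVec _ _ _
      have h3 : (P * (E * P)) *ᵥ u = P *ᵥ (E *ᵥ u) := by
        calc (P * (E * P)) *ᵥ u = P *ᵥ ((E * P) *ᵥ u) := (mulVec_mulVec _ _ _).symm
          _ = P *ᵥ (E *ᵥ (P *ᵥ u)) := congrArg _ (mulVec_mulVec _ _ _).symm
          _ = P *ᵥ (E *ᵥ u) := by rw [hPu]
      have h4 : star u ᵥ* P = star u := by rw [← hPco, ← star_mulVec, hPu]
      calc star u ⬝ᵥ (E *ᵥ u)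
          = (star u ᵥ* P) ⬝ᵥ (E *ᵥ u) := by rw [h4]
        _ = star u ⬝ᵥ (P *ᵥ (E *ᵥ u)) := (dotProduct_mulVec _ _ _).symm
        _ = star u ⬝ᵥ ((P * (E * P)) *ᵥ u) := by rw [h3]
        _ = star u ⬝ᵥ ((H * ((B * E * B) * H)) *ᵥ u) := by
            rw [show H * ((B * E * B) * H) = P * (E * P) from hHKH]
        _ = star u ⬝ᵥ (H *ᵥ (((B * E * B) * H) *ᵥ u)) :=
            congrArg _ (mulVec_mulVec _ _ _).symm
        _ = (star u ᵥ* H) ⬝ᵥ (((B * E * B) * H) *ᵥ u) := dotProduct_mulVec _ _ _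
        _ = star z ⬝ᵥ ((B * E * B) *ᵥ z) := by rw [← hstarz, ← h1]
    have hzz : star z ⬝ᵥ z = (RA : ℂ) := by
      calc star z ⬝ᵥ z = (star u ᵥ* H) ⬝ᵥ (H *ᵥ u) := by rw [← hstarz, hzdef]
        _ = star u ⬝ᵥ ((H * H) *ᵥ u) := by rw [← dotProduct_mulVec, mulVec_mulVec]
        _ = star u ⬝ᵥ (A *ᵥ u) := by rw [hHH]
        _ = (star x ᵥ* D) ⬝ᵥ (A *ᵥ (Dᴴ *ᵥ x)) := by rw [← hstaru, hudef]
        _ = star x ⬝ᵥ ((D * A * Dᴴ) *ᵥ x) := by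
            rw [← dotProduct_mulVec, mulVec_mulVec, mulVec_mulVec, Matrix.mul_assoc]
        _ = (RA : ℂ) := hqfA
    have hsumz : (∑ j, Complex.normSq (z j)) = RA := by
      have h6 := stmt10_dot_star_self z
      rw [hzz] at h6
      exact_mod_cast h6.symm
    have habs := stmt10_qf_abs_le (B * E * B) z
    rw [hsumz] at habs
    have hw : star z ⬝ᵥ ((B * E * B) *ᵥ z) = ((RM - RA : ℝ) : ℂ) := by
      rw [← hEz]
      have h7 : star u ⬝ᵥ (E *ᵥ u) = (RM : ℂ) - (RA : ℂ) := by rw [hsplit]; ring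
      rw [h7]
      push_cast
      ring
    rw [hw, Complex.norm_real, Real.norm_eq_abs] at habs
    exact habs
  -- nonnegativity of eigenvalues
  have hpsd_nonneg : ∀ (W : Matrix (Fin n) (Fin n) ℂ) (ν : Fin n → ℝ)
      (M : Matrix (Fin n) (Fin n) ℂ), M.PosSemidef →
      M = W * diagonal (fun i => (ν i : ℂ)) * Wᴴ → Wᴴ * W = 1 → ∀ j, 0 ≤ ν j := by
    intro W ν M hM hMeq hWu j
    have h0 := hM.dotProduct_mulVec_nonneg (W *ᵥ Pi.single j (1 : ℂ))
    rw [hMeq, stmt10_qf_eval W ν] at h0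
    have hc : Wᴴ *ᵥ (W *ᵥ Pi.single j (1 : ℂ)) = Pi.single j (1 : ℂ) := by
      rw [mulVec_mulVec, hWu, one_mulVec]
    rw [hc] at h0
    have hsum : (∑ k, ν k * Complex.normSq ((Pi.single j (1 : ℂ) : Fin n → ℂ) k)) = ν j := by
      rw [Finset.sum_eq_single j]
      · simp
      · intro k _ hk
        simp [Pi.single_eq_of_ne hk]
      · intro h
        exact absurd (Finset.mem_univ j) h
    rw [hsum] at h0
    exact_mod_cast Complex.zero_le_real.mp h0
  have hlamnn : ∀ j, 0 ≤ lam j := hpsd_nonneg W₁ lam _ hAt hAteig hW11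
  have hmunn : ∀ j, 0 ≤ mu j := hpsd_nonneg W₂ mu _ hAtEt hAtEteig hW21
  have hknn : 0 ≤ specNorm (B * E * B) := norm_nonneg _
  set k := specNorm (B * E * B) with hkdef
  -- norm transfer
  have hnorm : ∀ (W : Matrix (Fin n) (Fin n) ℂ), W * Wᴴ = 1 → ∀ x : Fin n → ℂ,
      (∑ j, Complex.normSq ((Wᴴ *ᵥ x) j)) = ∑ j, Complex.normSq (x j) := by
    intro W hWu x
    have h1 : star (Wᴴ *ᵥ x) ⬝ᵥ (Wᴴ *ᵥ x) = star x ⬝ᵥ x := by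
      rw [star_mulVec, conjTranspose_conjTranspose, ← dotProduct_mulVec, mulVec_mulVec,
        hWu, one_mulVec]
    rw [stmt10_dot_star_self, stmt10_dot_star_self] at h1
    exact_mod_cast h1
  intro i hi
  constructor
  · -- upper bound : mu (n-s+i) ≤ lam i + k |lam i|
    rw [abs_of_nonneg (hlamnn i)]
    have hcard : Fintype.card {j : Fin n // (j : ℕ) < (i : ℕ) ∨ s ≤ (j : ℕ)}
        + Fintype.card {j : Fin n // n - s + (i : ℕ) < (j : ℕ)} < n := by
      have c1 : Fintype.card {j : Fin n // (j : ℕ) < (i : ℕ) ∨ s ≤ (j : ℕ)}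
          = n - (s - (i : ℕ)) := by
        have he : Fintype.card {j : Fin n // (j : ℕ) < (i : ℕ) ∨ s ≤ (j : ℕ)}
            = Fintype.card {j : Fin n // ¬ ((i : ℕ) ≤ (j : ℕ) ∧ (j : ℕ) < s)} :=
          Fintype.card_congr (Equiv.subtypeEquivRight (fun j => by omega))
        rw [he, Fintype.card_subtype_compl, stmt10_card_interval (i : ℕ) s hs (by omega),
          Fintype.card_fin]
      have c2 : Fintype.card {j : Fin n // n - s + (i : ℕ) < (j : ℕ)}
          = n - (n - s + (i : ℕ) + 1) := by
        have he : Fintype.card {j : Fin n // n - s + (i : ℕ) < (j : ℕ)}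
            = Fintype.card {j : Fin n // n - s + (i : ℕ) + 1 ≤ (j : ℕ)} :=
          Fintype.card_congr (Equiv.subtypeEquivRight (fun j => by omega))
        rw [he, stmt10_card_ge _ (by omega)]
      rw [c1, c2]
      omega
    obtain ⟨x, hxne, hp, hq⟩ := stmt10_exists_constrained W₁ W₂
      (fun j => (j : ℕ) < (i : ℕ) ∨ s ≤ (j : ℕ)) (fun j => n - s + (i : ℕ) < (j : ℕ)) hcard
    set c := W₁ᴴ *ᵥ x with hcdef
    set d := W₂ᴴ *ᵥ x with hddef
    have hcs : ∀ j : Fin n, s ≤ (j : ℕ) → c j = 0 := fun j hj => hp j (Or.inr hj)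
    have hkey := key x hcs
    set RA := ∑ j, lam j * Complex.normSq (c j) with hRAdef
    set RM := ∑ j, mu j * Complex.normSq (d j) with hRMdef
    set N2 := ∑ j, Complex.normSq (x j) with hN2def
    have hNc : (∑ j, Complex.normSq (c j)) = N2 := hnorm W₁ hW12 x
    have hNd : (∑ j, Complex.normSq (d j)) = N2 := hnorm W₂ hW22 x
    have hN2pos : 0 < N2 := stmt10_sum_sq_pos x hxne
    have hRAle : (∑ j, lam j * Complex.normSq (c j)) ≤ lam i * N2 := by
      rw [← hNc, Finset.mul_sum]
      apply Finset.sum_le_sum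
      intro j _
      by_cases hcj : c j = 0
      · simp [hcj]
      · have hji : (i : ℕ) ≤ (j : ℕ) ∧ (j : ℕ) < s := by
          by_contra h
          exact hcj (hp j (by omega))
        have hll : lam j ≤ lam i := hlord i j (by
          rw [Fin.le_def]; exact hji.1) hji.2
        exact mul_le_mul_of_nonneg_right hll (Complex.normSq_nonneg _)
    set j₀ : Fin n := ⟨n - s + (i : ℕ), by omega⟩ with hj₀def
    have hRMge : mu j₀ * N2 ≤ ∑ j, mu j * Complex.normSq (d j) := by
      rw [← hNd, Finset.mul_sum]
      apply Finset.sum_le_sum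
      intro j _
      by_cases hdj : d j = 0
      · simp [hdj]
      · have hji : (j : ℕ) ≤ n - s + (i : ℕ) := by
          by_contra h
          exact hdj (hq j (by omega))
        have hmm : mu j₀ ≤ mu j := hmu (by rw [Fin.le_def]; exact hji)
        exact mul_le_mul_of_nonneg_right hmm (Complex.normSq_nonneg _)
    have habs' := abs_le.mp hkey
    have hfin : mu j₀ * N2 ≤ (lam i + k * lam i) * N2 := by
      have h8 : k * (∑ j, lam j * Complex.normSq (c j)) ≤ k * (lam i * N2) :=
        mul_le_mul_of_nonneg_left hRAle hknn
      nlinarith [habs'.2, hRMge, hRAle]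
    exact le_of_mul_le_mul_right hfin hN2pos
  · -- lower bound : mu i ≥ lam i - k |lam i|
    rw [ge_iff_le, abs_of_nonneg (hlamnn i)]
    have hcard : Fintype.card {j : Fin n // (i : ℕ) < (j : ℕ)}
        + Fintype.card {j : Fin n // (j : ℕ) < (i : ℕ)} < n := by
      have c1 : Fintype.card {j : Fin n // (i : ℕ) < (j : ℕ)} = n - ((i : ℕ) + 1) := by
        have he : Fintype.card {j : Fin n // (i : ℕ) < (j : ℕ)}
            = Fintype.card {j : Fin n // (i : ℕ) + 1 ≤ (j : ℕ)} :=
          Fintype.card_congr (Equiv.subtypeEquivRight (fun j => by omega))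
        rw [he, stmt10_card_ge _ (by omega)]
      have c2 : Fintype.card {j : Fin n // (j : ℕ) < (i : ℕ)} = (i : ℕ) :=
        stmt10_card_lt _ (by omega)
      rw [c1, c2]
      omega
    obtain ⟨x, hxne, hp, hq⟩ := stmt10_exists_constrained W₁ W₂
      (fun j => (i : ℕ) < (j : ℕ)) (fun j => (j : ℕ) < (i : ℕ)) hcard
    set c := W₁ᴴ *ᵥ x with hcdef
    set d := W₂ᴴ *ᵥ x with hddef
    have hcs : ∀ j : Fin n, s ≤ (j : ℕ) → c j = 0 := fun j hj => hp j (by omega)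
    have hkey := key x hcs
    set RA := ∑ j, lam j * Complex.normSq (c j) with hRAdef
    set RM := ∑ j, mu j * Complex.normSq (d j) with hRMdef
    set N2 := ∑ j, Complex.normSq (x j) with hN2def
    have hNc : (∑ j, Complex.normSq (c j)) = N2 := hnorm W₁ hW12 x
    have hNd : (∑ j, Complex.normSq (d j)) = N2 := hnorm W₂ hW22 x
    have hN2pos : 0 < N2 := stmt10_sum_sq_pos x hxne
    have hRAge : lam i * N2 ≤ ∑ j, lam j * Complex.normSq (c j) := by
      rw [← hNc, Finset.mul_sum]
      apply Finset.sum_le_sum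
      intro j _
      by_cases hcj : c j = 0
      · simp [hcj]
      · have hji : (j : ℕ) ≤ (i : ℕ) := by
          by_contra h
          exact hcj (hp j (by omega))
        have hll : lam i ≤ lam j := hlord j i (by rw [Fin.le_def]; exact hji) hi
        exact mul_le_mul_of_nonneg_right hll (Complex.normSq_nonneg _)
    have hRMle : (∑ j, mu j * Complex.normSq (d j)) ≤ mu i * N2 := by
      rw [← hNd, Finset.mul_sum]
      apply Finset.sum_le_sum
      intro j _
      by_cases hdj : d j = 0
      · simp [hdj]
      · have hji : (i : ℕ) ≤ (j : ℕ) := by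
          by_contra h
          exact hdj (hq j (by omega))
        have hmm : mu j ≤ mu i := hmu (by rw [Fin.le_def]; exact hji)
        exact mul_le_mul_of_nonneg_right hmm (Complex.normSq_nonneg _)
    have habs' := abs_le.mp hkey
    rcases le_or_gt k 1 with hk1 | hk1
    · have hfin : (lam i - k * lam i) * N2 ≤ mu i * N2 := by
        have h9 : 0 ≤ (1 - k) * ((∑ j, lam j * Complex.normSq (c j)) - lam i * N2) :=
          mul_nonneg (by linarith) (by linarith)
        nlinarith [habs'.1, hRMle, hRAge]
      exact le_of_mul_le_mul_right hfin hN2pos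
    · have : lam i - k * lam i ≤ 0 := by nlinarith [hlamnn i]
      linarith [hmunn i]
end

section
/- Let A be Hermitian non-singular, E Hermitian, and k = ‖A^{-1/2} E A^{-1/2}‖₂. Then there exists an index i ∈ {1,…,n} such that |λ_i(A+E) − λ_i(A)| ≤ k|λ_i(A)| ≤ ‖E‖₂, where eigenvalues of A and A+E are both in decreasing order (assuming also k ≤ 1 for the first inequality). -/
open Matrix
open scoped ComplexOrder

namespace Stmt12Aux

variable {n : ℕ}

lemma star_mul_self_eq (z : ℂ) : star z * z = ((‖z‖^2 : ℝ) : ℂ) := by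
  rw [Complex.sq_norm, Complex.normSq_eq_conj_mul_self]; rfl

/-- sum of squared norms -/
noncomputable def nsq (x : Fin n → ℂ) : ℝ := ∑ j, ‖x j‖^2

lemma nsq_nonneg (x : Fin n → ℂ) : 0 ≤ nsq x :=
  Finset.sum_nonneg fun _ _ => sq_nonneg _

lemma nsq_pos {x : Fin n → ℂ} (hx : x ≠ 0) : 0 < nsq x := by
  obtain ⟨j, hj⟩ : ∃ j, x j ≠ 0 := by
    by_contra h; push_neg at h; exact hx (funext h)
  exact Finset.sum_pos' (fun l _ => sq_nonneg _)
    ⟨j, Finset.mem_univ j, pow_pos (norm_pos_iff.mpr hj) 2⟩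

lemma dot_star_self (x : Fin n → ℂ) : star x ⬝ᵥ x = (nsq x : ℂ) := by
  simp only [dotProduct, Pi.star_apply, star_mul_self_eq, nsq]
  push_cast; ring

lemma key_dot (R G : Matrix (Fin n) (Fin n) ℂ) (x : Fin n → ℂ) :
    star x ⬝ᵥ ((Rᴴ * G) *ᵥ x) = star (R *ᵥ x) ⬝ᵥ (G *ᵥ x) := by
  rw [star_mulVec, ← Matrix.mulVec_mulVec, dotProduct_mulVec]

lemma unitary_mul_conj {W : Matrix (Fin n) (Fin n) ℂ} (hW : W ∈ Matrix.unitaryGroup (Fin n) ℂ) :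
    W * Wᴴ = 1 := by
  have := Matrix.mem_unitaryGroup_iff.mp hW
  rwa [Matrix.star_eq_conjTranspose] at this

lemma unitary_conj_mul {W : Matrix (Fin n) (Fin n) ℂ} (hW : W ∈ Matrix.unitaryGroup (Fin n) ℂ) :
    Wᴴ * W = 1 := by
  have := Matrix.mem_unitaryGroup_iff'.mp hW
  rwa [Matrix.star_eq_conjTranspose] at this

lemma unitary_dot {W : Matrix (Fin n) (Fin n) ℂ} (hW : W ∈ Matrix.unitaryGroup (Fin n) ℂ)
    (y : Fin n → ℂ) : star (W *ᵥ y) ⬝ᵥ (W *ᵥ y) = (nsq y : ℂ) := by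
  rw [← key_dot W W y, unitary_conj_mul hW, Matrix.one_mulVec, dot_star_self]

lemma diag_dot (d : Fin n → ℝ) (y : Fin n → ℂ) :
    star y ⬝ᵥ ((Matrix.diagonal (fun j => (d j : ℂ))) *ᵥ y) = ((∑ j, d j * ‖y j‖^2 : ℝ) : ℂ) := by
  simp only [dotProduct, Matrix.mulVec_diagonal, Pi.star_apply]
  push_cast
  congr 1; ext j
  rw [mul_left_comm, star_mul_self_eq]
  push_cast; ring

/-- the quadratic form of `W diag(d) Wᴴ` at `W *ᵥ y`. -/
lemma quad_eq {W : Matrix (Fin n) (Fin n) ℂ} (hW : W ∈ Matrix.unitaryGroup (Fin n) ℂ)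
    (d : Fin n → ℝ) (y : Fin n → ℂ) :
    star (W *ᵥ y) ⬝ᵥ ((W * Matrix.diagonal (fun j => (d j : ℂ)) * Wᴴ) *ᵥ (W *ᵥ y)) =
      ((∑ j, d j * ‖y j‖^2 : ℝ) : ℂ) := by
  have h1 := unitary_conj_mul hW
  rw [Matrix.mulVec_mulVec, mul_assoc, mul_assoc, h1, mul_one,
      star_mulVec, dotProduct_mulVec, Matrix.vecMul_vecMul, ← mul_assoc, h1, one_mul,
      ← dotProduct_mulVec, diag_dot]

/-- Submodule of vectors supported on `s`. -/
noncomputable def suppSub (n : ℕ) (s : Finset (Fin n)) : Submodule ℂ (Fin n → ℂ) where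
  carrier := {x | ∀ j ∉ s, x j = 0}
  add_mem' := by intro a b ha hb j hj; simp [ha j hj, hb j hj]
  zero_mem' := by intro j _; rfl
  smul_mem' := by intro c a ha j hj; simp [ha j hj]

lemma suppSub_eq_span (s : Finset (Fin n)) :
    suppSub n s = Submodule.span ℂ (Set.range (fun j : s => (Pi.single (j : Fin n) (1:ℂ) : Fin n → ℂ))) := by
  apply le_antisymm
  · intro x hx
    have hxe : x = ∑ j ∈ s, x j • (Pi.single j (1:ℂ) : Fin n → ℂ) := by
      funext l
      rw [Finset.sum_apply]
      by_cases hl : l ∈ s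
      · rw [Finset.sum_eq_single l]
        · simp
        · intro b _ hb; simp [Pi.single_apply, (Ne.symm hb)]
        · intro h; exact absurd hl h
      · rw [hx l hl, Finset.sum_eq_zero]
        intro b hb
        have : l ≠ b := fun h => hl (h ▸ hb)
        simp [Pi.single_apply, this]
    rw [hxe]
    exact Submodule.sum_mem _ fun j hj => Submodule.smul_mem _ _
      (Submodule.subset_span ⟨⟨j, hj⟩, rfl⟩)
  · rw [Submodule.span_le]
    rintro _ ⟨⟨j, hj⟩, rfl⟩
    intro l hl
    have : l ≠ j := fun h => hl (h ▸ hj)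
    simp [Pi.single_apply, this]

lemma suppSub_finrank (s : Finset (Fin n)) :
    Module.finrank ℂ (suppSub n s) = s.card := by
  rw [suppSub_eq_span]
  have hli : LinearIndependent ℂ (fun j : s => (Pi.single (j : Fin n) (1:ℂ) : Fin n → ℂ)) := by
    have h := (Pi.basisFun ℂ (Fin n)).linearIndependent
    have h2 := h.comp (fun j : s => (j : Fin n)) Subtype.val_injective
    convert h2 using 1
    funext j
    simp [Pi.basisFun_apply]
  rw [finrank_span_eq_card hli, Fintype.card_coe]

/-- multiplication by a unitary matrix as a linear equivalence -/
noncomputable def unitEquiv (W : Matrix (Fin n) (Fin n) ℂ)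
    (hW : W ∈ Matrix.unitaryGroup (Fin n) ℂ) : (Fin n → ℂ) ≃ₗ[ℂ] (Fin n → ℂ) :=
  LinearEquiv.ofLinear W.mulVecLin Wᴴ.mulVecLin
    (by rw [← Matrix.mulVecLin_mul, unitary_mul_conj hW, Matrix.mulVecLin_one])
    (by rw [← Matrix.mulVecLin_mul, unitary_conj_mul hW, Matrix.mulVecLin_one])

/-- Monotonicity of ordered eigenvalues with respect to the quadratic-form order. -/
lemma eig_mono {V W : Matrix (Fin n) (Fin n) ℂ} {b c : Fin n → ℝ}
    (hW : W ∈ Matrix.unitaryGroup (Fin n) ℂ) (hV : V ∈ Matrix.unitaryGroup (Fin n) ℂ)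
    (hb : Antitone b) (hc : Antitone c)
    (h : ∀ x : Fin n → ℂ,
      (star x ⬝ᵥ ((W * Matrix.diagonal (fun j => (b j : ℂ)) * Wᴴ) *ᵥ x)).re ≤
      (star x ⬝ᵥ ((V * Matrix.diagonal (fun j => (c j : ℂ)) * Vᴴ) *ᵥ x)).re)
    (i : Fin n) : b i ≤ c i := by
  classical
  set S₁ := (suppSub n (Finset.Iic i)).map (unitEquiv W hW : (Fin n → ℂ) →ₗ[ℂ] (Fin n → ℂ))
  set S₂ := (suppSub n (Finset.Ici i)).map (unitEquiv V hV : (Fin n → ℂ) →ₗ[ℂ] (Fin n → ℂ))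
  have hd1 : Module.finrank ℂ S₁ = (i : ℕ) + 1 := by
    rw [LinearEquiv.finrank_map_eq, suppSub_finrank, Fin.card_Iic]
  have hd2 : Module.finrank ℂ S₂ = n - (i : ℕ) := by
    rw [LinearEquiv.finrank_map_eq, suppSub_finrank, Fin.card_Ici]
  have hsum := Submodule.finrank_sup_add_finrank_inf_eq S₁ S₂
  have hsup : Module.finrank ℂ ↥(S₁ ⊔ S₂) ≤ n := by
    have := Submodule.finrank_le (S₁ ⊔ S₂)
    rwa [Module.finrank_fintype_fun_eq_card, Fintype.card_fin] at this
  have hpos : 0 < Module.finrank ℂ ↥(S₁ ⊓ S₂) := by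
    have hi := i.isLt
    omega
  obtain ⟨⟨x, hx⟩, hx0⟩ := Module.finrank_pos_iff_exists_ne_zero.mp hpos
  have hxne : x ≠ 0 := fun h => hx0 (Subtype.ext h)
  obtain ⟨y, hy, hyx⟩ := Submodule.mem_map.mp hx.1
  obtain ⟨z, hz, hzx⟩ := Submodule.mem_map.mp hx.2
  have hyx' : W *ᵥ y = x := hyx
  have hzx' : V *ᵥ z = x := hzx
  have hB : b i * nsq x ≤
      (star x ⬝ᵥ ((W * Matrix.diagonal (fun j => (b j : ℂ)) * Wᴴ) *ᵥ x)).re := by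
    rw [← hyx', quad_eq hW]
    have hnx : nsq (W *ᵥ y) = nsq y := by
      have := (dot_star_self (W *ᵥ y)).symm.trans (unitary_dot hW y)
      exact_mod_cast congrArg Complex.re this
    rw [hnx, Complex.ofReal_re, nsq, Finset.mul_sum]
    apply Finset.sum_le_sum
    intro j _
    by_cases hj : j ∈ Finset.Iic i
    · exact mul_le_mul_of_nonneg_right (hb (Finset.mem_Iic.mp hj)) (sq_nonneg _)
    · rw [hy j hj]; simp
  have hC : (star x ⬝ᵥ ((V * Matrix.diagonal (fun j => (c j : ℂ)) * Vᴴ) *ᵥ x)).re ≤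
      c i * nsq x := by
    rw [← hzx', quad_eq hV]
    have hnx : nsq (V *ᵥ z) = nsq z := by
      have := (dot_star_self (V *ᵥ z)).symm.trans (unitary_dot hV z)
      exact_mod_cast congrArg Complex.re this
    rw [hnx, Complex.ofReal_re, nsq, Finset.mul_sum]
    apply Finset.sum_le_sum
    intro j _
    by_cases hj : j ∈ Finset.Ici i
    · exact mul_le_mul_of_nonneg_right (hc (Finset.mem_Ici.mp hj)) (sq_nonneg _)
    · rw [hz j hj]; simp
  have := le_trans hB (le_trans (h x) hC)
  exact le_of_mul_le_mul_right (by simpa [mul_comm] using this) (nsq_pos hxne)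

section NormLemmas
open scoped Matrix.Norms.L2Operator

lemma euclid_apply (F : Matrix (Fin n) (Fin n) ℂ) (x : EuclideanSpace ℂ (Fin n)) (j : Fin n) :
    (Matrix.toEuclideanCLM (𝕜 := ℂ) F x) j = (F *ᵥ (fun i => x i)) j := rfl

lemma euclid_norm_sq (x : EuclideanSpace ℂ (Fin n)) : ‖x‖^2 = nsq (fun i => x i) := by
  rw [EuclideanSpace.norm_eq, Real.sq_sqrt (Finset.sum_nonneg fun _ _ => sq_nonneg _)]
  rfl

lemma rayleigh_abs (F : Matrix (Fin n) (Fin n) ℂ) (w : Fin n → ℂ) :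
    ‖star w ⬝ᵥ (F *ᵥ w)‖ ≤ ‖F‖ * nsq w := by
  let w' : EuclideanSpace ℂ (Fin n) := (WithLp.equiv 2 _).symm w
  have h1 : star w ⬝ᵥ (F *ᵥ w) = @inner ℂ _ _ w' ((Matrix.toEuclideanCLM (𝕜 := ℂ) F) w') := by
    rw [PiLp.inner_apply]
    simp only [dotProduct, Pi.star_apply]
    apply Finset.sum_congr rfl
    intro j _
    rw [euclid_apply]
    simp [w', mul_comm]
  rw [h1]
  calc ‖@inner ℂ _ _ w' ((Matrix.toEuclideanCLM (𝕜 := ℂ) F) w')‖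
      ≤ ‖w'‖ * ‖(Matrix.toEuclideanCLM (𝕜 := ℂ) F) w'‖ := norm_inner_le_norm _ _
    _ ≤ ‖w'‖ * (‖Matrix.toEuclideanCLM (𝕜 := ℂ) F‖ * ‖w'‖) := by
        gcongr; exact ContinuousLinearMap.le_opNorm _ _
    _ = ‖F‖ * ‖w'‖^2 := by rw [Matrix.cstar_norm_def]; ring
    _ = ‖F‖ * nsq w := by rw [euclid_norm_sq]; rfl

lemma rayleigh_re_abs (F : Matrix (Fin n) (Fin n) ℂ) (w : Fin n → ℂ) :
    |(star w ⬝ᵥ (F *ᵥ w)).re| ≤ ‖F‖ * nsq w :=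
  le_trans (Complex.abs_re_le_norm _) (rayleigh_abs F w)

lemma diag_norm_le {g : Fin n → ℂ} {t : ℝ} (ht : 0 ≤ t) (hg : ∀ j, ‖g j‖ ≤ t) :
    ‖(Matrix.diagonal g : Matrix (Fin n) (Fin n) ℂ)‖ ≤ t := by
  rw [Matrix.cstar_norm_def]
  apply ContinuousLinearMap.opNorm_le_bound _ ht
  intro x
  rw [EuclideanSpace.norm_eq, EuclideanSpace.norm_eq]
  have key : ∀ j : Fin n, ‖(Matrix.toEuclideanCLM (𝕜 := ℂ) (Matrix.diagonal g) x) j‖^2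
      ≤ t^2 * ‖x j‖^2 := by
    intro j
    rw [euclid_apply, Matrix.mulVec_diagonal, norm_mul, mul_pow]
    have := hg j
    gcongr
  calc Real.sqrt (∑ j, ‖(Matrix.toEuclideanCLM (𝕜 := ℂ) (Matrix.diagonal g) x) j‖^2)
      ≤ Real.sqrt (∑ j, t^2 * ‖x j‖^2) :=
        Real.sqrt_le_sqrt (Finset.sum_le_sum fun j _ => key j)
    _ = t * Real.sqrt (∑ j, ‖x j‖^2) := by
        rw [← Finset.mul_sum, Real.sqrt_mul (sq_nonneg t), Real.sqrt_sq ht]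

lemma norm_unitary [Nonempty (Fin n)] {U : Matrix (Fin n) (Fin n) ℂ}
    (hU : U ∈ Matrix.unitaryGroup (Fin n) ℂ) : ‖U‖ = 1 :=
  CStarRing.norm_of_mem_unitary hU

lemma norm_conj2_le [Nonempty (Fin n)] {P Q : Matrix (Fin n) (Fin n) ℂ}
    (hP : P ∈ Matrix.unitaryGroup (Fin n) ℂ) (hQ : Q ∈ Matrix.unitaryGroup (Fin n) ℂ)
    (X : Matrix (Fin n) (Fin n) ℂ) : ‖P * X * Q‖ ≤ ‖X‖ := by
  calc ‖P * X * Q‖ ≤ ‖P * X‖ * ‖Q‖ := Matrix.l2_opNorm_mul _ _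
    _ ≤ ‖P‖ * ‖X‖ * ‖Q‖ := by gcongr; exact Matrix.l2_opNorm_mul _ _
    _ = ‖X‖ := by rw [norm_unitary hP, norm_unitary hQ]; ring

end NormLemmas

lemma cpow_abs {t : ℝ} (ht : t ≠ 0) :
    ‖(t : ℂ) ^ (-(1:ℂ)/2)‖ = (Real.sqrt |t|)⁻¹ := by
  rw [
    Complex.norm_cpow_of_ne_zero (Complex.ofReal_ne_zero.mpr ht)]
  have h1 : ((-(1:ℂ)/2)).re = -(1/2 : ℝ) := by norm_num
  have h2 : ((-(1:ℂ)/2)).im = 0 := by norm_num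
  rw [h1, h2, mul_zero, Real.exp_zero, div_one, Complex.norm_real, Real.norm_eq_abs,
    Real.rpow_neg (abs_nonneg t), Real.sqrt_eq_rpow]

lemma mono_plus {k : ℝ} (hk0 : 0 ≤ k) (hk1 : k ≤ 1) {s t : ℝ} (hst : s ≤ t) :
    s + k * |s| ≤ t + k * |t| := by
  rcases abs_cases s with ⟨h1, _⟩ | ⟨h1, _⟩ <;> rcases abs_cases t with ⟨h2, _⟩ | ⟨h2, _⟩ <;>
    nlinarith

lemma mono_minus {k : ℝ} (hk0 : 0 ≤ k) (hk1 : k ≤ 1) {s t : ℝ} (hst : s ≤ t) :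
    s - k * |s| ≤ t - k * |t| := by
  rcases abs_cases s with ⟨h1, _⟩ | ⟨h1, _⟩ <;> rcases abs_cases t with ⟨h2, _⟩ | ⟨h2, _⟩ <;>
    nlinarith

lemma VDV_mul {V : Matrix (Fin n) (Fin n) ℂ} (hV : V ∈ Matrix.unitaryGroup (Fin n) ℂ)
    (f g : Fin n → ℂ) :
    (V * Matrix.diagonal f * Vᴴ) * (V * Matrix.diagonal g * Vᴴ) =
      V * Matrix.diagonal (fun j => f j * g j) * Vᴴ := by
  have h1 := unitary_conj_mul hV
  simp only [mul_assoc]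
  rw [← Matrix.mul_assoc Vᴴ V (Matrix.diagonal g * Vᴴ), h1, Matrix.one_mul,
    ← Matrix.mul_assoc (Matrix.diagonal f) (Matrix.diagonal g) Vᴴ,
    Matrix.diagonal_mul_diagonal]

lemma VDV_conjT (V : Matrix (Fin n) (Fin n) ℂ) (f : Fin n → ℂ) :
    (V * Matrix.diagonal f * Vᴴ)ᴴ = V * Matrix.diagonal (fun j => star (f j)) * Vᴴ := by
  rw [Matrix.conjTranspose_mul, Matrix.conjTranspose_mul, Matrix.diagonal_conjTranspose,
    Matrix.conjTranspose_conjTranspose, Matrix.mul_assoc]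
  rfl

lemma VDV_one {V : Matrix (Fin n) (Fin n) ℂ} (hV : V ∈ Matrix.unitaryGroup (Fin n) ℂ) :
    V * Matrix.diagonal (fun _ : Fin n => (1:ℂ)) * Vᴴ = 1 := by
  rw [Matrix.diagonal_one, Matrix.mul_one, unitary_mul_conj hV]

end Stmt12Aux

section Main
open Stmt12Aux
open scoped Matrix.Norms.L2Operator

set_option maxHeartbeats 1000000 in
/-- Theorem 3.3.  `A` Hermitian non-singular with eigenvalues `a`
in decreasing order, `E` Hermitian, `A + E` with eigenvalues `mu` in decreasing
order, `k = ‖A^{-1/2} E A^{-1/2}‖₂ ≤ 1`.  Then there exists an index `i` with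
`|λ_i(A+E) - λ_i(A)| ≤ k|λ_i(A)| ≤ ‖E‖₂`. -/
theorem stmt12 (n : ℕ) (hn : 0 < n)
    (A E V W : Matrix (Fin n) (Fin n) ℂ)
    (a mu : Fin n → ℝ)
    (hE : E.IsHermitian)
    (hV : V ∈ Matrix.unitaryGroup (Fin n) ℂ)
    (hAeig : A = V * Matrix.diagonal (fun i => (a i : ℂ)) * Vᴴ)
    (hnz : ∀ i, a i ≠ 0)
    (ha : Antitone a)
    (hW : W ∈ Matrix.unitaryGroup (Fin n) ℂ)
    (hAE : A + E = W * Matrix.diagonal (fun i => (mu i : ℂ)) * Wᴴ)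
    (hmu : Antitone mu)
    (hk : specNorm ((V * Matrix.diagonal (fun i => (a i : ℂ) ^ (-(1 : ℂ)/2)) * Vᴴ) * E *
        (V * Matrix.diagonal (fun i => (a i : ℂ) ^ (-(1 : ℂ)/2)) * Vᴴ)) ≤ 1) :
    ∃ i : Fin n,
      |mu i - a i| ≤ specNorm ((V * Matrix.diagonal (fun i => (a i : ℂ) ^ (-(1 : ℂ)/2)) * Vᴴ) * E *
          (V * Matrix.diagonal (fun i => (a i : ℂ) ^ (-(1 : ℂ)/2)) * Vᴴ)) * |a i| ∧
      specNorm ((V * Matrix.diagonal (fun i => (a i : ℂ) ^ (-(1 : ℂ)/2)) * Vᴴ) * E *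
          (V * Matrix.diagonal (fun i => (a i : ℂ) ^ (-(1 : ℂ)/2)) * Vᴴ)) * |a i| ≤ specNorm E := by
  classical
  haveI : Nonempty (Fin n) := ⟨⟨0, hn⟩⟩
  set N := V * Matrix.diagonal (fun i => (a i : ℂ) ^ (-(1 : ℂ)/2)) * Vᴴ with hNdef
  set k := specNorm (N * E * N) with hkdef
  have hkS : k = ‖N * E * N‖ := hkdef.trans rfl
  have hk0 : 0 ≤ k := by rw [hkS]; exact norm_nonneg _
  have hk1 : k ≤ 1 := hk
  set sa : Fin n → ℝ := fun j => Real.sqrt |a j| with hsadef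
  have hsa : ∀ j, 0 < sa j := fun j => Real.sqrt_pos.mpr (abs_pos.mpr (hnz j))
  set M := V * Matrix.diagonal (fun j => (((sa j)⁻¹ : ℝ) : ℂ)) * Vᴴ with hMdef
  set R := V * Matrix.diagonal (fun j => ((sa j : ℝ) : ℂ)) * Vᴴ with hRdef
  set u : Fin n → ℂ := fun j => (a j : ℂ) ^ (-(1 : ℂ)/2) * ((sa j : ℝ) : ℂ) with hudef
  set U := V * Matrix.diagonal u * Vᴴ with hUdef
  set F := M * E * M with hFdef
  have hu_norm : ∀ j, ‖u j‖ = 1 := by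
    intro j
    rw [hudef]
    simp only
    rw [norm_mul, cpow_abs (hnz j), Complex.norm_real, Real.norm_eq_abs, abs_of_pos (hsa j)]
    exact inv_mul_cancel₀ (hsa j).ne'
  have hU_mem : U ∈ Matrix.unitaryGroup (Fin n) ℂ := by
    rw [Matrix.mem_unitaryGroup_iff', Matrix.star_eq_conjTranspose, hUdef, VDV_conjT,
      VDV_mul hV]
    have heq : (fun j => star (u j) * u j) = fun _ : Fin n => (1:ℂ) := by
      funext j
      rw [star_mul_self_eq, hu_norm j]
      norm_num
    rw [heq, VDV_one hV]
  have hNUM : N = U * M := by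
    have hfun : (fun j => u j * (((sa j)⁻¹ : ℝ) : ℂ)) = fun i => (a i : ℂ) ^ (-(1:ℂ)/2) := by
      funext j
      have hne : ((sa j : ℝ) : ℂ) ≠ 0 := Complex.ofReal_ne_zero.mpr (hsa j).ne'
      simp only [hudef]
      push_cast
      rw [mul_assoc, mul_inv_cancel₀ hne, mul_one]
    rw [hUdef, hMdef, VDV_mul hV, hfun, hNdef]
  have hNMU : N = M * U := by
    have hfun : (fun j => (((sa j)⁻¹ : ℝ) : ℂ) * u j) = fun i => (a i : ℂ) ^ (-(1:ℂ)/2) := by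
      funext j
      have hne : ((sa j : ℝ) : ℂ) ≠ 0 := Complex.ofReal_ne_zero.mpr (hsa j).ne'
      simp only [hudef]
      push_cast
      rw [mul_comm, mul_assoc, mul_inv_cancel₀ hne, mul_one]
    rw [hUdef, hMdef, VDV_mul hV, hfun, hNdef]
  have hRM : R * M = 1 := by
    rw [hRdef, hMdef, VDV_mul hV]
    have heq : (fun j => ((sa j : ℝ) : ℂ) * (((sa j)⁻¹ : ℝ) : ℂ)) = fun _ : Fin n => (1:ℂ) := by
      funext j
      rw [← Complex.ofReal_mul, mul_inv_cancel₀ (hsa j).ne']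
      norm_num
    rw [heq, VDV_one hV]
  have hMR : M * R = 1 := by
    rw [hRdef, hMdef, VDV_mul hV]
    have heq : (fun j => (((sa j)⁻¹ : ℝ) : ℂ) * ((sa j : ℝ) : ℂ)) = fun _ : Fin n => (1:ℂ) := by
      funext j
      rw [← Complex.ofReal_mul, inv_mul_cancel₀ (hsa j).ne']
      norm_num
    rw [heq, VDV_one hV]
  have hRherm : Rᴴ = R := by
    have hfun : (fun j => star ((sa j : ℝ) : ℂ)) = fun j => ((sa j : ℝ) : ℂ) := by
      funext j
      rw [Complex.star_def, Complex.conj_ofReal]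
    rw [hRdef, VDV_conjT, hfun]
  have hEform : E = R * F * R := by
    rw [hFdef]
    calc E = (R * M) * E * (M * R) := by rw [hRM, hMR, Matrix.one_mul, Matrix.mul_one]
    _ = R * (M * E * M) * R := by simp only [Matrix.mul_assoc]
  have hSUF : N * E * N = U * F * U := by
    rw [hFdef]
    nth_rewrite 1 [hNUM]
    nth_rewrite 1 [hNMU]
    simp only [Matrix.mul_assoc]
  have hF_eq : Uᴴ * (N * E * N) * Uᴴ = F := by
    rw [hSUF]
    simp only [← Matrix.mul_assoc]
    rw [unitary_conj_mul hU_mem, Matrix.one_mul, Matrix.mul_assoc,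
      unitary_mul_conj hU_mem, Matrix.mul_one]
  have hUH : Uᴴ ∈ Matrix.unitaryGroup (Fin n) ℂ := by
    rw [← Matrix.star_eq_conjTranspose]; exact Unitary.star_mem hU_mem
  have hFnorm : ‖F‖ ≤ k := by
    rw [hkS, ← hF_eq]
    exact norm_conj2_le hUH hUH _
  have habsA_quad : ∀ x : Fin n → ℂ,
      (star x ⬝ᵥ ((V * Matrix.diagonal (fun j => ((|a j| : ℝ) : ℂ)) * Vᴴ) *ᵥ x)).re
        = nsq (R *ᵥ x) := by
    intro x
    have hRR : V * Matrix.diagonal (fun j => ((|a j| : ℝ) : ℂ)) * Vᴴ = Rᴴ * R := by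
      have hfun : (fun j => ((sa j : ℝ) : ℂ) * ((sa j : ℝ) : ℂ))
          = fun j => ((|a j| : ℝ) : ℂ) := by
        funext j
        simp only [hsadef, ← Complex.ofReal_mul, Real.mul_self_sqrt (abs_nonneg _)]
      rw [hRherm, hRdef, VDV_mul hV, hfun]
    rw [hRR, key_dot, dot_star_self, Complex.ofReal_re]
  have hE_bound : ∀ x : Fin n → ℂ, |(star x ⬝ᵥ (E *ᵥ x)).re| ≤ k * nsq (R *ᵥ x) := by
    intro x
    have hq : star x ⬝ᵥ (E *ᵥ x) = star (R *ᵥ x) ⬝ᵥ (F *ᵥ (R *ᵥ x)) := by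
      conv_lhs => rw [hEform]
      have h2 : R * F * R = Rᴴ * (F * R) := by rw [hRherm, Matrix.mul_assoc]
      have h3 : (F * R) *ᵥ x = F *ᵥ (R *ᵥ x) := by rw [Matrix.mulVec_mulVec]
      rw [h2, key_dot, h3]
    rw [hq]
    exact le_trans (rayleigh_re_abs F (R *ᵥ x))
      (mul_le_mul_of_nonneg_right hFnorm (nsq_nonneg _))
  -- the two one-sided comparisons
  have hplus : Antitone (fun l => a l + k * |a l|) :=
    fun i j hij => mono_plus hk0 hk1 (ha hij)
  have hminus : Antitone (fun l => a l - k * |a l|) :=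
    fun i j hij => mono_minus hk0 hk1 (ha hij)
  have hyp1 : ∀ x : Fin n → ℂ,
      (star x ⬝ᵥ ((W * Matrix.diagonal (fun j => (mu j : ℂ)) * Wᴴ) *ᵥ x)).re ≤
      (star x ⬝ᵥ ((V * Matrix.diagonal (fun j => ((a j + k * |a j| : ℝ) : ℂ)) * Vᴴ) *ᵥ x)).re := by
    intro x
    set z := Vᴴ *ᵥ x with hzdef
    have hxz : V *ᵥ z = x := by
      rw [hzdef, Matrix.mulVec_mulVec, unitary_mul_conj hV, Matrix.one_mulVec]
    have hnsqR : nsq (R *ᵥ x) = ∑ j, |a j| * ‖z j‖^2 := by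
      rw [← habsA_quad x]
      conv_lhs => rw [← hxz]
      rw [quad_eq hV (fun j => |a j|) z, Complex.ofReal_re]
    have hAq : (star x ⬝ᵥ (A *ᵥ x)).re = ∑ j, a j * ‖z j‖^2 := by
      conv_lhs => rw [hAeig, ← hxz]
      rw [quad_eq hV a z, Complex.ofReal_re]
    have hCq : (star x ⬝ᵥ ((V * Matrix.diagonal (fun j => ((a j + k * |a j| : ℝ) : ℂ)) * Vᴴ) *ᵥ x)).re
        = ∑ j, (a j + k * |a j|) * ‖z j‖^2 := by
      conv_lhs => rw [← hxz]
      rw [quad_eq hV (fun j => a j + k * |a j|) z, Complex.ofReal_re]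
    rw [← hAE, Matrix.add_mulVec, dotProduct_add, Complex.add_re, hCq, hAq]
    have hE1 : (star x ⬝ᵥ (E *ᵥ x)).re ≤ k * ∑ j, |a j| * ‖z j‖^2 := by
      rw [← hnsqR]
      exact le_trans (le_abs_self _) (hE_bound x)
    have expand : ∑ j, (a j + k * |a j|) * ‖z j‖^2
        = (∑ j, a j * ‖z j‖^2) + k * ∑ j, |a j| * ‖z j‖^2 := by
      rw [Finset.mul_sum, ← Finset.sum_add_distrib]
      exact Finset.sum_congr rfl fun j _ => by ring
    rw [expand]
    linarith [hE1]
  have hyp2 : ∀ x : Fin n → ℂ,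
      (star x ⬝ᵥ ((V * Matrix.diagonal (fun j => ((a j - k * |a j| : ℝ) : ℂ)) * Vᴴ) *ᵥ x)).re ≤
      (star x ⬝ᵥ ((W * Matrix.diagonal (fun j => (mu j : ℂ)) * Wᴴ) *ᵥ x)).re := by
    intro x
    set z := Vᴴ *ᵥ x with hzdef
    have hxz : V *ᵥ z = x := by
      rw [hzdef, Matrix.mulVec_mulVec, unitary_mul_conj hV, Matrix.one_mulVec]
    have hnsqR : nsq (R *ᵥ x) = ∑ j, |a j| * ‖z j‖^2 := by
      rw [← habsA_quad x]
      conv_lhs => rw [← hxz]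
      rw [quad_eq hV (fun j => |a j|) z, Complex.ofReal_re]
    have hAq : (star x ⬝ᵥ (A *ᵥ x)).re = ∑ j, a j * ‖z j‖^2 := by
      conv_lhs => rw [hAeig, ← hxz]
      rw [quad_eq hV a z, Complex.ofReal_re]
    have hCq : (star x ⬝ᵥ ((V * Matrix.diagonal (fun j => ((a j - k * |a j| : ℝ) : ℂ)) * Vᴴ) *ᵥ x)).re
        = ∑ j, (a j - k * |a j|) * ‖z j‖^2 := by
      conv_lhs => rw [← hxz]
      rw [quad_eq hV (fun j => a j - k * |a j|) z, Complex.ofReal_re]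
    rw [← hAE, Matrix.add_mulVec, dotProduct_add, Complex.add_re, hCq, hAq]
    have hE1 : -(k * ∑ j, |a j| * ‖z j‖^2) ≤ (star x ⬝ᵥ (E *ᵥ x)).re := by
      rw [← hnsqR]
      exact le_trans (neg_le_neg (hE_bound x)) (neg_abs_le _)
    have expand : ∑ j, (a j - k * |a j|) * ‖z j‖^2
        = (∑ j, a j * ‖z j‖^2) - k * ∑ j, |a j| * ‖z j‖^2 := by
      rw [Finset.mul_sum, ← Finset.sum_sub_distrib]
      exact Finset.sum_congr rfl fun j _ => by ring
    rw [expand]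
    linarith [hE1]
  have main1 : ∀ i, mu i ≤ a i + k * |a i| := fun i =>
    eig_mono (c := fun l => a l + k * |a l|) hW hV hmu hplus hyp1 i
  have main2 : ∀ i, a i - k * |a i| ≤ mu i := fun i =>
    eig_mono (b := fun l => a l - k * |a l|) hV hW hminus hmu hyp2 i
  -- choose the minimizing index
  obtain ⟨i0, -, hi0⟩ := Finset.exists_min_image Finset.univ (fun j => |a j|)
    ⟨⟨0, hn⟩, Finset.mem_univ _⟩
  refine ⟨i0, ?_, ?_⟩
  · exact abs_le.mpr ⟨by linarith [main2 i0], by linarith [main1 i0]⟩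
  · have hVH : Vᴴ ∈ Matrix.unitaryGroup (Fin n) ℂ := by
      rw [← Matrix.star_eq_conjTranspose]; exact Unitary.star_mem hV
    have hNn : ‖N‖ ≤ (sa i0)⁻¹ := by
      rw [hNdef]
      refine le_trans (norm_conj2_le hV hVH _) ?_
      refine diag_norm_le (inv_nonneg.mpr (hsa i0).le) ?_
      intro j
      rw [cpow_abs (hnz j)]
      exact inv_anti₀ (hsa i0) (Real.sqrt_le_sqrt (hi0 j (Finset.mem_univ _)))
    have hkb : k ≤ (sa i0)⁻¹ * ‖E‖ * (sa i0)⁻¹ := by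
      rw [hkS]
      calc ‖N * E * N‖ ≤ ‖N * E‖ * ‖N‖ := Matrix.l2_opNorm_mul _ _
        _ ≤ (‖N‖ * ‖E‖) * ‖N‖ :=
            mul_le_mul_of_nonneg_right (Matrix.l2_opNorm_mul _ _) (norm_nonneg _)
        _ ≤ ((sa i0)⁻¹ * ‖E‖) * (sa i0)⁻¹ :=
            mul_le_mul (mul_le_mul_of_nonneg_right hNn (norm_nonneg _)) hNn (norm_nonneg _)
              (mul_nonneg (inv_nonneg.mpr (hsa i0).le) (norm_nonneg _))
    have hsq1 : (sa i0)⁻¹ * (sa i0)⁻¹ * |a i0| = 1 := by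
      have hss : sa i0 * sa i0 = |a i0| := Real.mul_self_sqrt (abs_nonneg _)
      have hne : sa i0 ≠ 0 := (hsa i0).ne'
      rw [← hss]
      field_simp
    have hspecE : specNorm E = ‖E‖ := rfl
    rw [hspecE]
    calc k * |a i0| ≤ ((sa i0)⁻¹ * ‖E‖ * (sa i0)⁻¹) * |a i0| :=
          mul_le_mul_of_nonneg_right hkb (abs_nonneg _)
      _ = ‖E‖ * ((sa i0)⁻¹ * (sa i0)⁻¹ * |a i0|) := by ring
      _ = ‖E‖ := by rw [hsq1, mul_one]

end Main
end

section
/- Let A be Hermitian of rank r ≤ n with eigenvalues λ₁ ≥ ⋯ ≥ λ_r, λ_{r+1} = ⋯ = λ_n = 0, E Hermitian, and k = ‖(A^{1/2})⁺ E (A^{1/2})⁺‖₂. If the eigenvalue of A with smallest nonzero absolute value has algebraic multiplicity at least n−r+1, then there exists i ∈ {1,…,r} with λ_i + k|λ_i| ≤ λ_{n-r+i} + ‖E‖₂ and λ_i − k|λ_i| ≥ λ_i − ‖E‖₂. -/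
open Matrix
open scoped ComplexOrder

/-!
The pseudoinverse of `V diag(λ^{1/2}) Vᴴ` is `V diag(λ^{-1/2}) Vᴴ` (with `0⁻¹ = 0`), so its
spectral norm is at most `|λ_j|^{-1/2}` for the eigenvalue `λ_j` of smallest nonzero modulus;
hence `k |λ_j| ≤ ‖E‖₂`. As the nonzero eigenvalues are sorted, the indices `l` with `λ_l = λ_j`
form an interval, which has at least `n - r + 1` elements. For its first index `i` both `λ_i` and
`λ_{n-r+i}` equal `λ_j`, and the two inequalities reduce to `k |λ_j| ≤ ‖E‖₂`.
-/

open scoped Matrix.Norms.L2Operator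

theorem specNorm_eq_l2_opNorm {m n : Type*} [Fintype m] [Fintype n] [DecidableEq n]
    (A : Matrix m n ℂ) : specNorm A = ‖A‖ := rfl

namespace IsMP

section Rectangular

variable {m n : Type*} [Fintype m] [Fintype n] {A : Matrix m n ℂ} {B B₁ B₂ : Matrix n m ℂ}

theorem conjTranspose (h : IsMP A B) : IsMP Aᴴ Bᴴ := by
  obtain ⟨hABA, hBAB, hAB, hBA⟩ := h
  refine ⟨?_, ?_, ?_, ?_⟩
  · rw [← conjTranspose_mul, ← conjTranspose_mul, ← Matrix.mul_assoc, hABA]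
  · rw [← conjTranspose_mul, ← conjTranspose_mul, ← Matrix.mul_assoc, hBAB]
  · rw [← conjTranspose_mul, hBA, hBA]
  · rw [← conjTranspose_mul, hAB, hAB]

theorem mul_eq_mul (h₁ : IsMP A B₁) (h₂ : IsMP A B₂) : A * B₁ = A * B₂ :=
  calc A * B₁ = (A * B₁)ᴴ := h₁.2.2.1.symm
    _ = B₁ᴴ * (A * B₂ * A)ᴴ := by rw [conjTranspose_mul, h₂.1]
    _ = (A * B₁)ᴴ * (A * B₂)ᴴ := by simp only [conjTranspose_mul, Matrix.mul_assoc]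
    _ = A * B₁ * A * B₂ := by rw [h₁.2.2.1, h₂.2.2.1, ← Matrix.mul_assoc]
    _ = A * B₂ := by rw [h₁.1]

theorem unique (h₁ : IsMP A B₁) (h₂ : IsMP A B₂) : B₁ = B₂ := by
  have hBA : B₁ * A = B₂ * A := by
    rw [← h₁.2.2.2, ← h₂.2.2.2, conjTranspose_mul, conjTranspose_mul,
      mul_eq_mul h₁.conjTranspose h₂.conjTranspose]
  calc B₁ = B₁ * A * B₁ := h₁.2.1.symm
    _ = B₁ * A * B₂ := by rw [Matrix.mul_assoc, mul_eq_mul h₁ h₂, ← Matrix.mul_assoc]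
    _ = B₂ * A * B₂ := by rw [hBA]
    _ = B₂ := h₂.2.1

end Rectangular

variable {n : Type*} [Fintype n]

theorem map {F : Type*} [FunLike F (Matrix n n ℂ) (Matrix n n ℂ)] [MulHomClass F _ _]
    [StarHomClass F _ _] (φ : F) {A B : Matrix n n ℂ} (h : IsMP A B) : IsMP (φ A) (φ B) := by
  simp only [IsMP, ← star_eq_conjTranspose, ← map_mul, ← map_star] at h ⊢
  simp only [h, and_self]

end IsMP

section Diagonal

variable {n : Type*} [Fintype n] [DecidableEq n]

theorem isMP_diagonal (d : n → ℂ) : IsMP (diagonal d) (diagonal d⁻¹) := by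
  have hproj : ∀ z : ℂ, star (z * z⁻¹) = z * z⁻¹ := fun z => by
    rcases eq_or_ne z 0 with rfl | hz <;> simp [*]
  simp only [IsMP, diagonal_mul_diagonal, diagonal_conjTranspose]
  refine ⟨?_, ?_, ?_, ?_⟩ <;> congr 1 <;> funext i
  · exact mul_inv_mul_cancel (d i)
  · simpa using mul_inv_mul_cancel (d i)⁻¹
  · exact hproj (d i)
  · simpa [mul_comm] using hproj (d i)

theorem isMP_unitary_conj_diagonal {V : Matrix n n ℂ} (hV : V ∈ unitaryGroup n ℂ) (d : n → ℂ) :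
    IsMP (V * diagonal d * Vᴴ) (V * diagonal d⁻¹ * Vᴴ) :=
  (isMP_diagonal d).map (Unitary.conjStarAlgAut ℂ _ ⟨V, hV⟩)

theorem IsMP.l2_opNorm_eq_of_unitary_conj_diagonal {V B : Matrix n n ℂ}
    (hV : V ∈ unitaryGroup n ℂ) {d : n → ℂ} (hB : IsMP (V * diagonal d * Vᴴ) B) :
    ‖B‖ = ‖d⁻¹‖ := by
  rw [hB.unique (isMP_unitary_conj_diagonal hV d), ← star_eq_conjTranspose,
    CStarRing.norm_mul_mem_unitary _ (Unitary.star_mem hV), CStarRing.norm_mem_unitary_mul _ hV,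
    l2_opNorm_diagonal]

end Diagonal

theorem norm_ofReal_cpow_half (t : ℝ) : ‖(t : ℂ) ^ ((1 : ℂ) / 2)‖ = √|t| := by
  rw [show (1 : ℂ) / 2 = ((1 / 2 : ℝ) : ℂ) by norm_num, Complex.norm_cpow_real, Complex.norm_real,
    Real.norm_eq_abs, Real.sqrt_eq_rpow]

theorem norm_inv_cpow_half_le {ι : Type*} [Fintype ι] {lam : ι → ℝ} {x : ℝ} (hx : x ≠ 0)
    (hmin : ∀ l, lam l ≠ 0 → |x| ≤ |lam l|) :
    ‖(fun l => (lam l : ℂ) ^ ((1 : ℂ) / 2))⁻¹‖ ≤ (√|x|)⁻¹ := by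
  refine (pi_norm_le_iff_of_nonneg (by positivity)).mpr fun l => ?_
  rw [Pi.inv_apply, norm_inv, norm_ofReal_cpow_half]
  rcases eq_or_ne (lam l) 0 with hl | hl
  · simp [hl]
  · exact inv_anti₀ (by positivity) (Real.sqrt_le_sqrt (hmin l hl))

theorem norm_mul_mul_self_mul_le {R : Type*} [NonUnitalSeminormedRing R] (b e : R) {x : ℝ}
    (hx : 0 < x) (hb : ‖b‖ ≤ (√x)⁻¹) : ‖b * e * b‖ * x ≤ ‖e‖ := by
  have hb2 : ‖b‖ ^ 2 * x ≤ 1 :=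
    calc ‖b‖ ^ 2 * x ≤ (√x)⁻¹ ^ 2 * x := by gcongr
      _ = 1 := by rw [inv_pow, Real.sq_sqrt hx.le, inv_mul_cancel₀ hx.ne']
  calc ‖b * e * b‖ * x ≤ ‖b‖ * ‖e‖ * ‖b‖ * x := by gcongr; exact norm_mul₃_le
    _ = ‖e‖ * (‖b‖ ^ 2 * x) := by ring
    _ ≤ ‖e‖ := mul_le_of_le_one_right (norm_nonneg _) hb2

theorem AntitoneOn.ordConnected_setOf_eq {ι α : Type*} [Preorder ι] [PartialOrder α]
    {f : ι → α} {t : Set ι} (hf : AntitoneOn f t) (ht : t.OrdConnected) {x : α}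
    (hx : ∀ i, f i = x → i ∈ t) : {i | f i = x}.OrdConnected :=
  ⟨fun a ha b hb m hm => by
    have hm_mem := ht.out (hx a ha) (hx b hb) hm
    exact le_antisymm (ha ▸ hf (hx a ha) hm_mem hm.1) (hb ▸ hf hm_mem (hx b hb) hm.2)⟩

theorem Set.OrdConnected.exists_add_mem {n s : ℕ} {S : Set (Fin n)} (hS : S.OrdConnected)
    (hcard : s + 1 ≤ S.ncard) : ∃ a ∈ S, ∃ h : s + (a : ℕ) < n, (⟨s + a, h⟩ : Fin n) ∈ S := by
  classical
  have hne : S.toFinset.Nonempty := by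
    rw [Set.toFinset_nonempty, ← Set.ncard_pos]; omega
  set a := S.toFinset.min' hne
  set b := S.toFinset.max' hne
  have ha : a ∈ S := by simpa using S.toFinset.min'_mem hne
  have hb : b ∈ S := by simpa using S.toFinset.max'_mem hne
  have hsub : S.toFinset ⊆ Finset.Icc a b := fun i hi =>
    Finset.mem_Icc.mpr ⟨S.toFinset.min'_le i hi, S.toFinset.le_max' i hi⟩
  have hspan : s + (a : ℕ) ≤ b := by
    have hcard_le := Finset.card_le_card hsub
    rw [Fin.card_Icc, ← Set.ncard_eq_toFinset_card'] at hcard_le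
    have hab : (a : ℕ) ≤ b := S.toFinset.min'_le b (by simpa using hb)
    omega
  exact ⟨a, ha, by omega, hS.out ha hb ⟨Fin.le_def.mpr (by simp), Fin.le_def.mpr hspan⟩⟩

theorem stmt15 (n r : ℕ)
    (E V B : Matrix (Fin n) (Fin n) ℂ)
    (lam : Fin n → ℝ)
    (hV : V ∈ Matrix.unitaryGroup (Fin n) ℂ)
    (hord : ∀ i j : Fin n, i ≤ j → (j : ℕ) < r → lam j ≤ lam i)
    (hzero : ∀ i : Fin n, r ≤ (i : ℕ) → lam i = 0)
    (hB : IsMP (V * Matrix.diagonal (fun i => (lam i : ℂ) ^ ((1 : ℂ)/2)) * Vᴴ) B)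
    (hmult : ∃ j : Fin n, lam j ≠ 0 ∧ (∀ l, lam l ≠ 0 → |lam j| ≤ |lam l|) ∧
      n - r + 1 ≤ {l : Fin n | lam l = lam j}.ncard) :
    ∃ i : Fin n, ∃ hi : (i : ℕ) < r,
      lam i + specNorm (B * E * B) * |lam i| ≤ lam ⟨n - r + (i : ℕ), by omega⟩ + specNorm E ∧
      lam i - specNorm (B * E * B) * |lam i| ≥ lam i - specNorm E := by
  obtain ⟨j, hj0, hjmin, hjcard⟩ := hmult
  have hlt : ∀ i : Fin n, lam i = lam j → (i : ℕ) < r := fun i hi =>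
    lt_of_not_ge fun h => hj0 (hi ▸ hzero i h)
  have hanti : AntitoneOn lam (Fin.val ⁻¹' Set.Iio r) := fun i _ k hk hik => hord i k hik hk
  have hlevel : {l : Fin n | lam l = lam j}.OrdConnected :=
    hanti.ordConnected_setOf_eq
      (Set.ordConnected_Iio.preimage_mono Fin.val_strictMono.monotone) hlt
  obtain ⟨a, ha, _, hsa⟩ := hlevel.exists_add_mem hjcard
  have hkE : specNorm (B * E * B) * |lam j| ≤ specNorm E := by
    rw [specNorm_eq_l2_opNorm, specNorm_eq_l2_opNorm]
    exact norm_mul_mul_self_mul_le B E (abs_pos.mpr hj0)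
      ((hB.l2_opNorm_eq_of_unitary_conj_diagonal hV).trans_le (norm_inv_cpow_half_le hj0 hjmin))
  refine ⟨a, hlt a ha, ?_, ?_⟩
  · rw [show lam ⟨n - r + a, _⟩ = lam j from hsa, ha]
    linarith
  · rw [ha]
    linarith
end

section
/- Let A be an m×n complex matrix (m ≥ n) of rank r with thin SVD A = U_rΣ_rV_r*, E any m×n matrix, S⁺ = V_rΣ_r^{-1/2}U_r*, and k = ‖S⁺ES⁺‖₂ ≤ 1. Then σ_{m+n-2r+i}(A+E) ≤ (1+k)σ_i(A) for all i ∈ {1,…,2r−m}, and σ_i(A+E) ≥ (1−k)σ_i(A) for all i ∈ {1,…,r}, with singular values in decreasing order. -/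
open Matrix
open scoped ComplexOrder

namespace Stmt16Aux

variable {a b c : ℕ}

lemma tl_mul (X : Matrix (Fin a) (Fin b) ℂ) (Y : Matrix (Fin b) (Fin c) ℂ)
    (v : EuclideanSpace ℂ (Fin c)) :
    Matrix.toEuclideanLin (X * Y) v = Matrix.toEuclideanLin X (Matrix.toEuclideanLin Y v) := by
  simp [Matrix.toEuclideanLin_apply, Matrix.mulVec_mulVec]

lemma tl_add (X Y : Matrix (Fin a) (Fin b) ℂ) (v : EuclideanSpace ℂ (Fin b)) :
    Matrix.toEuclideanLin (X + Y) v
      = Matrix.toEuclideanLin X v + Matrix.toEuclideanLin Y v := by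
  rw [map_add]; rfl

lemma tl_one (v : EuclideanSpace ℂ (Fin a)) :
    Matrix.toEuclideanLin (1 : Matrix (Fin a) (Fin a) ℂ) v = v := by
  simp [Matrix.toEuclideanLin_apply, Matrix.one_mulVec]

lemma tl_diag (d : Fin a → ℂ) (v : EuclideanSpace ℂ (Fin a)) (l : Fin a) :
    Matrix.toEuclideanLin (Matrix.diagonal d) v l = d l * v l := by
  show (Matrix.diagonal d *ᵥ _) l = _
  rw [Matrix.mulVec_diagonal]; rfl

lemma eu_norm_sq (x : EuclideanSpace ℂ (Fin a)) : ‖x‖ ^ 2 = ∑ l, ‖x l‖ ^ 2 := by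
  rw [EuclideanSpace.norm_eq, Real.sq_sqrt (by positivity)]

lemma eu_inner_sum (x y : EuclideanSpace ℂ (Fin a)) :
    (inner ℂ x y : ℂ) = ∑ l, starRingEnd ℂ (x l) * y l := by
  simp [PiLp.inner_apply, mul_comm]

lemma tl_inner_left (X : Matrix (Fin a) (Fin b) ℂ) (u : EuclideanSpace ℂ (Fin b))
    (v : EuclideanSpace ℂ (Fin a)) :
    (inner ℂ (Matrix.toEuclideanLin X u) v : ℂ) = inner ℂ u (Matrix.toEuclideanLin Xᴴ v) := by
  rw [Matrix.toEuclideanLin_conjTranspose_eq_adjoint, LinearMap.adjoint_inner_right]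

lemma tl_inner_right (X : Matrix (Fin a) (Fin b) ℂ) (u : EuclideanSpace ℂ (Fin a))
    (v : EuclideanSpace ℂ (Fin b)) :
    (inner ℂ u (Matrix.toEuclideanLin X v) : ℂ) = inner ℂ (Matrix.toEuclideanLin Xᴴ u) v := by
  rw [tl_inner_left, Matrix.conjTranspose_conjTranspose]

lemma norm_sq_eq_re_inner (x : EuclideanSpace ℂ (Fin a)) :
    ‖x‖ ^ 2 = Complex.re (inner ℂ x x : ℂ) :=
  (inner_self_eq_norm_sq (𝕜 := ℂ) x).symm

lemma tl_isometry {X : Matrix (Fin a) (Fin b) ℂ} (hX : Xᴴ * X = 1)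
    (y : EuclideanSpace ℂ (Fin b)) : ‖Matrix.toEuclideanLin X y‖ = ‖y‖ := by
  have h : (inner ℂ (Matrix.toEuclideanLin X y) (Matrix.toEuclideanLin X y) : ℂ)
      = inner ℂ y y := by
    rw [tl_inner_left, ← tl_mul, hX, tl_one]
  have h2 : ‖Matrix.toEuclideanLin X y‖ ^ 2 = ‖y‖ ^ 2 := by
    rw [norm_sq_eq_re_inner, norm_sq_eq_re_inner, h]
  rw [← Real.sqrt_sq (norm_nonneg (Matrix.toEuclideanLin X y)), h2,
    Real.sqrt_sq (norm_nonneg y)]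

lemma tl_contract {X : Matrix (Fin a) (Fin b) ℂ} (hX : Xᴴ * X = 1)
    (v : EuclideanSpace ℂ (Fin a)) : ‖Matrix.toEuclideanLin Xᴴ v‖ ≤ ‖v‖ := by
  set u := Matrix.toEuclideanLin Xᴴ v with hu
  have h1 : (inner ℂ u u : ℂ) = inner ℂ (Matrix.toEuclideanLin X u) v :=
    (tl_inner_left X u v).symm
  have h2 : ‖u‖ ^ 2 = Complex.re (inner ℂ (Matrix.toEuclideanLin X u) v : ℂ) := by
    rw [norm_sq_eq_re_inner, h1]
  have h3 : Complex.re (inner ℂ (Matrix.toEuclideanLin X u) v : ℂ)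
      ≤ ‖Matrix.toEuclideanLin X u‖ * ‖v‖ := re_inner_le_norm (𝕜 := ℂ) _ _
  rw [tl_isometry hX] at h3
  nlinarith [norm_nonneg u, norm_nonneg v]

lemma tl_opnorm (X : Matrix (Fin a) (Fin b) ℂ) (v : EuclideanSpace ℂ (Fin b)) :
    ‖Matrix.toEuclideanLin X v‖ ≤ specNorm X * ‖v‖ := by
  have := (LinearMap.toContinuousLinearMap (Matrix.toEuclideanLin X)).le_opNorm v
  simpa [specNorm] using this

/-- coordinate-selection linear map -/
def selLM {s : ℕ} (emb : Fin s → Fin a) : EuclideanSpace ℂ (Fin a) →ₗ[ℂ] (Fin s → ℂ) where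
  toFun v := fun l => v (emb l)
  map_add' _ _ := rfl
  map_smul' _ _ := rfl

lemma selLM_apply {s : ℕ} (emb : Fin s → Fin a) (v : EuclideanSpace ℂ (Fin a)) (l : Fin s) :
    selLM emb v l = v (emb l) := rfl

lemma ker_finrank_ge {D C : Type*} [AddCommGroup D] [Module ℂ D] [FiniteDimensional ℂ D]
    [AddCommGroup C] [Module ℂ C] [FiniteDimensional ℂ C] (φ : D →ₗ[ℂ] C) :
    Module.finrank ℂ D ≤ Module.finrank ℂ C + Module.finrank ℂ (LinearMap.ker φ) := by
  have h1 := LinearMap.finrank_range_add_finrank_ker φ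
  have h2 : Module.finrank ℂ (LinearMap.range φ) ≤ Module.finrank ℂ C :=
    Submodule.finrank_le _
  omega

lemma ker_sel_finrank {s : ℕ} (T : EuclideanSpace ℂ (Fin a) →ₗ[ℂ] EuclideanSpace ℂ (Fin a))
    (emb : Fin s → Fin a) :
    a ≤ s + Module.finrank ℂ (LinearMap.ker ((selLM emb).comp T)) := by
  have := ker_finrank_ge ((selLM emb).comp T)
  simpa [finrank_euclideanSpace_fin, Module.finrank_fintype_fun_eq_card] using this

lemma exists_ne_zero_mem_inf (V₁ V₂ : Submodule ℂ (EuclideanSpace ℂ (Fin a)))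
    (h : a < Module.finrank ℂ V₁ + Module.finrank ℂ V₂) :
    ∃ x, x ∈ V₁ ∧ x ∈ V₂ ∧ x ≠ 0 := by
  have hsup : Module.finrank ℂ (V₁ ⊔ V₂ : Submodule ℂ (EuclideanSpace ℂ (Fin a))) ≤ a := by
    have h1 : Module.finrank ℂ (V₁ ⊔ V₂ : Submodule ℂ (EuclideanSpace ℂ (Fin a)))
        ≤ Module.finrank ℂ (EuclideanSpace ℂ (Fin a)) := Submodule.finrank_le _
    simpa [finrank_euclideanSpace_fin] using h1
  have heq := Submodule.finrank_sup_add_finrank_inf_eq V₁ V₂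
  have hpos : 0 < Module.finrank ℂ (V₁ ⊓ V₂ : Submodule ℂ (EuclideanSpace ℂ (Fin a))) := by
    omega
  have hne : (V₁ ⊓ V₂ : Submodule ℂ (EuclideanSpace ℂ (Fin a))) ≠ ⊥ := by
    intro hcon
    rw [hcon] at hpos
    simp [finrank_bot] at hpos
  obtain ⟨x, hx, hx0⟩ := Submodule.exists_mem_ne_zero_of_ne_bot hne
  exact ⟨x, hx.1, hx.2, hx0⟩

lemma sq_le_of_sq {x y : ℝ} (hx : 0 ≤ x) (hy : 0 ≤ y) (h : x ^ 2 ≤ y ^ 2) : x ≤ y := by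
  nlinarith

lemma norm_tl_sq {m' n' : ℕ} (B : Matrix (Fin m') (Fin n') ℂ) (τ : Fin n' → ℝ)
    (W : Matrix (Fin n') (Fin n') ℂ)
    (hAE : Bᴴ * B = W * Matrix.diagonal (fun l => ((τ l ^ 2 : ℝ) : ℂ)) * Wᴴ)
    (x : EuclideanSpace ℂ (Fin n')) :
    ‖Matrix.toEuclideanLin B x‖ ^ 2
      = ∑ l, τ l ^ 2 * ‖Matrix.toEuclideanLin Wᴴ x l‖ ^ 2 := by
  have h1 : (inner ℂ (Matrix.toEuclideanLin B x) (Matrix.toEuclideanLin B x) : ℂ)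
      = inner ℂ (Matrix.toEuclideanLin Wᴴ x)
          (Matrix.toEuclideanLin (Matrix.diagonal (fun l => ((τ l ^ 2 : ℝ) : ℂ)))
            (Matrix.toEuclideanLin Wᴴ x)) := by
    rw [tl_inner_left, ← tl_mul, hAE, tl_mul, tl_mul, tl_inner_right]
  have h2 : (inner ℂ (Matrix.toEuclideanLin Wᴴ x)
          (Matrix.toEuclideanLin (Matrix.diagonal (fun l => ((τ l ^ 2 : ℝ) : ℂ)))
            (Matrix.toEuclideanLin Wᴴ x)) : ℂ)
      = ((∑ l, τ l ^ 2 * ‖Matrix.toEuclideanLin Wᴴ x l‖ ^ 2 : ℝ) : ℂ) := by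
    rw [eu_inner_sum, Complex.ofReal_sum]
    refine Finset.sum_congr rfl fun l _ => ?_
    rw [tl_diag]
    set z := Matrix.toEuclideanLin Wᴴ x l with hz
    have hzz : starRingEnd ℂ z * z = ((‖z‖ ^ 2 : ℝ) : ℂ) := by
      rw [mul_comm, Complex.mul_conj, Complex.sq_norm]
    calc starRingEnd ℂ z * (((τ l ^ 2 : ℝ) : ℂ) * z)
        = ((τ l ^ 2 : ℝ) : ℂ) * (starRingEnd ℂ z * z) := by ring
      _ = ((τ l ^ 2 * ‖z‖ ^ 2 : ℝ) : ℂ) := by rw [hzz, ← Complex.ofReal_mul]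
  rw [norm_sq_eq_re_inner, h1, h2, Complex.ofReal_re]

lemma sv_lower {m' n' : ℕ} (B : Matrix (Fin m') (Fin n') ℂ) (τ : Fin n' → ℝ)
    (hτ : Antitone τ) (hτ0 : ∀ l, 0 ≤ τ l) (W : Matrix (Fin n') (Fin n') ℂ)
    (hW2 : W * Wᴴ = 1)
    (hAE : Bᴴ * B = W * Matrix.diagonal (fun l => ((τ l ^ 2 : ℝ) : ℂ)) * Wᴴ)
    (j : Fin n') (c : ℝ) (V : Submodule ℂ (EuclideanSpace ℂ (Fin n')))
    (hdim : j.val + 1 ≤ Module.finrank ℂ V)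
    (hb : ∀ x ∈ V, c * ‖x‖ ≤ ‖Matrix.toEuclideanLin B x‖) : c ≤ τ j := by
  set φ := (selLM (fun l : Fin j.val => (⟨l.val, lt_trans l.isLt j.isLt⟩ : Fin n'))).comp
      (Matrix.toEuclideanLin Wᴴ) with hφ
  have hker := ker_sel_finrank (Matrix.toEuclideanLin Wᴴ)
      (fun l : Fin j.val => (⟨l.val, lt_trans l.isLt j.isLt⟩ : Fin n'))
  rw [← hφ] at hker
  obtain ⟨x, hxV, hxK, hx0⟩ := exists_ne_zero_mem_inf V (LinearMap.ker φ) (by omega)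
  have hq0 : ∀ l : Fin n', l.val < j.val → Matrix.toEuclideanLin Wᴴ x l = 0 := by
    intro l hl
    have hm := LinearMap.mem_ker.mp hxK
    have h5 := congrFun hm (⟨l.val, hl⟩ : Fin j.val)
    have h6 : Matrix.toEuclideanLin Wᴴ x (⟨l.val, lt_trans hl j.isLt⟩ : Fin n') = 0 := by
      simpa [hφ, selLM_apply] using h5
    have h7 : (⟨l.val, lt_trans hl j.isLt⟩ : Fin n') = l := Fin.ext rfl
    rwa [h7] at h6
  have hkey := norm_tl_sq B τ W hAE x
  have hqn : ‖Matrix.toEuclideanLin Wᴴ x‖ = ‖x‖ :=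
    tl_isometry (by rw [Matrix.conjTranspose_conjTranspose]; exact hW2) x
  have hsum : ∑ l, τ l ^ 2 * ‖Matrix.toEuclideanLin Wᴴ x l‖ ^ 2
      ≤ τ j ^ 2 * ∑ l, ‖Matrix.toEuclideanLin Wᴴ x l‖ ^ 2 := by
    rw [Finset.mul_sum]
    refine Finset.sum_le_sum fun l _ => ?_
    by_cases hl : l.val < j.val
    · rw [hq0 l hl]; simp
    · have hjl : j ≤ l := by rw [Fin.le_def]; omega
      have hτl : τ l ≤ τ j := hτ hjl
      have h0l := hτ0 l
      have hsq : τ l ^ 2 ≤ τ j ^ 2 := by nlinarith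
      exact mul_le_mul_of_nonneg_right hsq (sq_nonneg _)
  have h2 : ‖Matrix.toEuclideanLin B x‖ ^ 2 ≤ (τ j * ‖x‖) ^ 2 := by
    rw [hkey, mul_pow]
    calc ∑ l, τ l ^ 2 * ‖Matrix.toEuclideanLin Wᴴ x l‖ ^ 2
        ≤ τ j ^ 2 * ∑ l, ‖Matrix.toEuclideanLin Wᴴ x l‖ ^ 2 := hsum
      _ = τ j ^ 2 * ‖x‖ ^ 2 := by rw [← eu_norm_sq, hqn]
  have h3 : ‖Matrix.toEuclideanLin B x‖ ≤ τ j * ‖x‖ :=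
    sq_le_of_sq (norm_nonneg _) (mul_nonneg (hτ0 j) (norm_nonneg x)) h2
  have h4 := hb x hxV
  have hxpos : 0 < ‖x‖ := norm_pos_iff.mpr hx0
  nlinarith

lemma sv_upper {m' n' : ℕ} (B : Matrix (Fin m') (Fin n') ℂ) (τ : Fin n' → ℝ)
    (hτ : Antitone τ) (hτ0 : ∀ l, 0 ≤ τ l) (W : Matrix (Fin n') (Fin n') ℂ)
    (hW2 : W * Wᴴ = 1)
    (hAE : Bᴴ * B = W * Matrix.diagonal (fun l => ((τ l ^ 2 : ℝ) : ℂ)) * Wᴴ)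
    (j : Fin n') (c : ℝ) (V : Submodule ℂ (EuclideanSpace ℂ (Fin n')))
    (hdim : n' ≤ Module.finrank ℂ V + j.val)
    (hb : ∀ x ∈ V, ‖Matrix.toEuclideanLin B x‖ ≤ c * ‖x‖) : τ j ≤ c := by
  have hjn := j.isLt
  set emb : Fin (n' - 1 - j.val) → Fin n' :=
    (fun l => (⟨j.val + 1 + l.val, by have := l.isLt; omega⟩ : Fin n')) with hemb
  set φ := (selLM emb).comp (Matrix.toEuclideanLin Wᴴ) with hφ
  have hker := ker_sel_finrank (Matrix.toEuclideanLin Wᴴ) emb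
  rw [← hφ] at hker
  obtain ⟨x, hxV, hxK, hx0⟩ := exists_ne_zero_mem_inf V (LinearMap.ker φ) (by omega)
  have hq0 : ∀ l : Fin n', j.val < l.val → Matrix.toEuclideanLin Wᴴ x l = 0 := by
    intro l hl
    have hm := LinearMap.mem_ker.mp hxK
    have h5 := congrFun hm (⟨l.val - j.val - 1, by have := l.isLt; omega⟩ : Fin (n' - 1 - j.val))
    have h7 : emb (⟨l.val - j.val - 1, by have := l.isLt; omega⟩ : Fin (n' - 1 - j.val)) = l := by
      rw [hemb]; exact Fin.ext (by simp; omega)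
    have h6 : Matrix.toEuclideanLin Wᴴ x l = 0 := by
      rw [← h7]
      simpa [hφ, selLM_apply] using h5
    exact h6
  have hkey := norm_tl_sq B τ W hAE x
  have hqn : ‖Matrix.toEuclideanLin Wᴴ x‖ = ‖x‖ :=
    tl_isometry (by rw [Matrix.conjTranspose_conjTranspose]; exact hW2) x
  have hsum : τ j ^ 2 * ∑ l, ‖Matrix.toEuclideanLin Wᴴ x l‖ ^ 2
      ≤ ∑ l, τ l ^ 2 * ‖Matrix.toEuclideanLin Wᴴ x l‖ ^ 2 := by
    rw [Finset.mul_sum]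
    refine Finset.sum_le_sum fun l _ => ?_
    by_cases hl : j.val < l.val
    · rw [hq0 l hl]; simp
    · have hjl : l ≤ j := by rw [Fin.le_def]; omega
      have hτl : τ j ≤ τ l := hτ hjl
      have h0l := hτ0 j
      have hsq : τ j ^ 2 ≤ τ l ^ 2 := by nlinarith
      exact mul_le_mul_of_nonneg_right hsq (sq_nonneg _)
  have h2 : (τ j * ‖x‖) ^ 2 ≤ ‖Matrix.toEuclideanLin B x‖ ^ 2 := by
    rw [hkey, mul_pow]
    calc τ j ^ 2 * ‖x‖ ^ 2 = τ j ^ 2 * ∑ l, ‖Matrix.toEuclideanLin Wᴴ x l‖ ^ 2 := by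
          rw [← hqn, ← eu_norm_sq]
      _ ≤ _ := hsum
  have hxpos : 0 < ‖x‖ := norm_pos_iff.mpr hx0
  have hcx := hb x hxV
  have h3 : τ j * ‖x‖ ≤ ‖Matrix.toEuclideanLin B x‖ :=
    sq_le_of_sq (mul_nonneg (hτ0 j) (norm_nonneg x)) (norm_nonneg _) h2
  nlinarith

end Stmt16Aux

set_option maxHeartbeats 8000000 in
open Stmt16Aux in
/-- Theorem 4.1. -/
theorem stmt16 (m n r : ℕ) (hmn : n ≤ m) (hr : r ≤ n)
    (A E : Matrix (Fin m) (Fin n) ℂ)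
    (Ur : Matrix (Fin m) (Fin r) ℂ) (Vr : Matrix (Fin n) (Fin r) ℂ)
    (σ : Fin r → ℝ) (hσpos : ∀ i, 0 < σ i) (hσ : Antitone σ)
    (hUr : Urᴴ * Ur = 1) (hVr : Vrᴴ * Vr = 1)
    (hA : A = Ur * Matrix.diagonal (fun i => (σ i : ℂ)) * Vrᴴ)
    (hk : specNorm ((Vr * Matrix.diagonal (fun i => ((Real.sqrt (σ i))⁻¹ : ℂ)) * Urᴴ) * E *
        (Vr * Matrix.diagonal (fun i => ((Real.sqrt (σ i))⁻¹ : ℂ)) * Urᴴ)) ≤ 1)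
    (τ : Fin n → ℝ) (hτpos : ∀ i, 0 ≤ τ i) (hτ : Antitone τ)
    (W : Matrix (Fin n) (Fin n) ℂ) (hW : W ∈ Matrix.unitaryGroup (Fin n) ℂ)
    (hAE : (A + E)ᴴ * (A + E) = W * Matrix.diagonal (fun i => ((τ i ^ 2 : ℝ) : ℂ)) * Wᴴ) :
    (∀ i : ℕ, ∀ hi : i + m < 2 * r,
      τ ⟨m + n - 2 * r + i, by omega⟩ ≤
        (1 + specNorm ((Vr * Matrix.diagonal (fun i => ((Real.sqrt (σ i))⁻¹ : ℂ)) * Urᴴ) * E *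
          (Vr * Matrix.diagonal (fun i => ((Real.sqrt (σ i))⁻¹ : ℂ)) * Urᴴ))) * σ ⟨i, by omega⟩) ∧
    (∀ i : Fin r,
      τ ⟨(i : ℕ), by omega⟩ ≥
        (1 - specNorm ((Vr * Matrix.diagonal (fun i => ((Real.sqrt (σ i))⁻¹ : ℂ)) * Urᴴ) * E *
          (Vr * Matrix.diagonal (fun i => ((Real.sqrt (σ i))⁻¹ : ℂ)) * Urᴴ))) * σ i) := by
  classical
  have hWW : W * Wᴴ = 1 := by
    simpa [Matrix.star_eq_conjTranspose] using Matrix.mem_unitaryGroup_iff.mp hW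
  set Di := Matrix.diagonal (fun i : Fin r => ((Real.sqrt (σ i))⁻¹ : ℂ)) with hDi
  set SP := Vr * Di * Urᴴ with hSP
  set k := specNorm (SP * E * SP) with hkdef
  have hk0 : (0:ℝ) ≤ k := norm_nonneg _
  have hk1 : k ≤ 1 := hk
  have hsq : ∀ l : Fin r, (0:ℝ) < Real.sqrt (σ l) := fun l => Real.sqrt_pos.mpr (hσpos l)
  have hss : ∀ l : Fin r, Real.sqrt (σ l) * Real.sqrt (σ l) = σ l :=
    fun l => Real.mul_self_sqrt (hσpos l).le
  set Dm := Matrix.diagonal (fun i : Fin r => ((Real.sqrt (σ i) : ℝ) : ℂ)) with hDm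
  set Sgm := Matrix.diagonal (fun i : Fin r => (σ i : ℂ)) with hSgm
  have hDmDi : Dm * Di = 1 := by
    rw [hDm, hDi, Matrix.diagonal_mul_diagonal]
    rw [show (fun i : Fin r => ((Real.sqrt (σ i) : ℝ) : ℂ) * ((Real.sqrt (σ i) : ℂ))⁻¹)
        = fun _ => (1:ℂ) from funext fun i => mul_inv_cancel₀ (by
          simpa using (hsq i).ne')]
    exact Matrix.diagonal_one
  have hDiDm : Di * Dm = 1 := by
    rw [hDm, hDi, Matrix.diagonal_mul_diagonal]
    rw [show (fun i : Fin r => ((Real.sqrt (σ i) : ℂ))⁻¹ * ((Real.sqrt (σ i) : ℝ) : ℂ))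
        = fun _ => (1:ℂ) from funext fun i => inv_mul_cancel₀ (by
          simpa using (hsq i).ne')]
    exact Matrix.diagonal_one
  have hDm2 : Dm * Dm = Sgm := by
    have hfun : (fun i : Fin r => ((Real.sqrt (σ i) : ℝ) : ℂ) * ((Real.sqrt (σ i) : ℝ) : ℂ))
        = fun i : Fin r => ((σ i : ℝ) : ℂ) :=
      funext fun i => by rw [← Complex.ofReal_mul, hss i]
    rw [hDm, hSgm, Matrix.diagonal_mul_diagonal, hfun]
  set M := Urᴴ * E * Vr with hM
  set Fm := Di * M * Di with hFm
  set Km := (1 : Matrix (Fin r) (Fin r) ℂ) + Fm with hKm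
  have hSpE : SP * E * SP = Vr * Fm * Urᴴ := by
    rw [hSP, hFm, hM]; simp only [Matrix.mul_assoc]
  have hFb : ∀ y : EuclideanSpace ℂ (Fin r),
      ‖Matrix.toEuclideanLin Fm y‖ ≤ k * ‖y‖ := by
    intro y
    have hFm2 : Fm = Vrᴴ * (SP * E * SP) * Ur := by
      rw [hSpE]
      rw [show Vrᴴ * (Vr * Fm * Urᴴ) * Ur = (Vrᴴ * Vr) * (Fm * (Urᴴ * Ur)) from by
        simp only [Matrix.mul_assoc], hVr, hUr, Matrix.one_mul, Matrix.mul_one]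
    calc ‖Matrix.toEuclideanLin Fm y‖
        = ‖Matrix.toEuclideanLin Vrᴴ
            (Matrix.toEuclideanLin (SP * E * SP) (Matrix.toEuclideanLin Ur y))‖ := by
          rw [← tl_mul, ← tl_mul, ← hFm2]
      _ ≤ ‖Matrix.toEuclideanLin (SP * E * SP) (Matrix.toEuclideanLin Ur y)‖ :=
          tl_contract hVr _
      _ ≤ k * ‖Matrix.toEuclideanLin Ur y‖ := by rw [hkdef]; exact tl_opnorm _ _
      _ = k * ‖y‖ := by rw [tl_isometry hUr]
  have hDKD : Dm * (Km * Dm) = Sgm + M := by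
    have h1 : Dm * (Km * Dm) = Dm * Dm + Dm * ((Di * M * Di) * Dm) := by
      rw [hKm, hFm, Matrix.add_mul, Matrix.one_mul, Matrix.mul_add]
    rw [h1, hDm2]
    congr 1
    rw [show Dm * ((Di * M * Di) * Dm) = (Dm * Di) * (M * (Di * Dm)) from by
      simp only [Matrix.mul_assoc], hDmDi, hDiDm, Matrix.one_mul, Matrix.mul_one]
  have hVrinj : Function.Injective (Matrix.toEuclideanLin Vr) := by
    intro u v huv
    have h1 : ‖Matrix.toEuclideanLin Vr (u - v)‖ = ‖u - v‖ := tl_isometry hVr _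
    rw [map_sub, huv, sub_self, norm_zero] at h1
    exact sub_eq_zero.mp (norm_eq_zero.mp h1.symm)
  have hmapr : ∀ Y : Submodule ℂ (EuclideanSpace ℂ (Fin r)),
      Module.finrank ℂ (Submodule.map (Matrix.toEuclideanLin Vr) Y) = Module.finrank ℂ Y :=
    fun Y => (LinearEquiv.finrank_eq (Submodule.equivMapOfInjective _ hVrinj Y)).symm
  have hAVr : A * Vr = Ur * Sgm := by
    rw [hA, Matrix.mul_assoc (Ur * Sgm) Vrᴴ Vr, hVr, Matrix.mul_one]
  have hDmc : ∀ (v : EuclideanSpace ℂ (Fin r)) (l : Fin r),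
      ‖Matrix.toEuclideanLin Dm v l‖ = Real.sqrt (σ l) * ‖v l‖ := by
    intro v l
    rw [hDm, tl_diag, norm_mul, Complex.norm_real, Real.norm_eq_abs,
      abs_of_nonneg (Real.sqrt_nonneg _)]
  have hDic : ∀ (v : EuclideanSpace ℂ (Fin r)) (l : Fin r),
      ‖Matrix.toEuclideanLin Di v l‖ = (Real.sqrt (σ l))⁻¹ * ‖v l‖ := by
    intro v l
    rw [hDi, tl_diag, norm_mul, norm_inv, Complex.norm_real, Real.norm_eq_abs,
      abs_of_nonneg (Real.sqrt_nonneg _)]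
  constructor
  · -- Part 1 : upper bounds
    intro i hi
    have hin1 : i < r := by omega
    set iF : Fin r := ⟨i, hin1⟩ with hiF
    set Nm := E * Vr - Ur * M with hNm
    have hUrN : Urᴴ * Nm = 0 := by
      rw [hNm, Matrix.mul_sub]
      rw [show Urᴴ * (Ur * M) = (Urᴴ * Ur) * M from by simp only [Matrix.mul_assoc], hUr,
        Matrix.one_mul, hM, Matrix.mul_assoc]
      exact sub_self _
    set f := (selLM (fun l : Fin i => (⟨l.val, lt_trans l.isLt hin1⟩ : Fin r))).comp
        (Matrix.toEuclideanLin (Km * Dm)) with hf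
    have hkf := ker_sel_finrank (Matrix.toEuclideanLin (Km * Dm))
        (fun l : Fin i => (⟨l.val, lt_trans l.isLt hin1⟩ : Fin r))
    rw [← hf] at hkf
    set g := (Matrix.toEuclideanLin Nm :
      EuclideanSpace ℂ (Fin r) →ₗ[ℂ] EuclideanSpace ℂ (Fin m)) with hg
    have hsubg : LinearMap.range g ≤ LinearMap.ker (Matrix.toEuclideanLin Urᴴ) := by
      rintro v ⟨y, rfl⟩
      show Matrix.toEuclideanLin Urᴴ (Matrix.toEuclideanLin Nm y) = 0
      rw [← tl_mul, hUrN, map_zero]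
      rfl
    have e3 := LinearMap.finrank_range_add_finrank_ker
      (Matrix.toEuclideanLin Urᴴ : EuclideanSpace ℂ (Fin m) →ₗ[ℂ] EuclideanSpace ℂ (Fin r))
    have e4 : LinearMap.range
        (Matrix.toEuclideanLin Urᴴ : EuclideanSpace ℂ (Fin m) →ₗ[ℂ] EuclideanSpace ℂ (Fin r))
        = ⊤ :=
      LinearMap.range_eq_top.mpr fun w => ⟨Matrix.toEuclideanLin Ur w, by
        rw [← tl_mul, hUr, tl_one]⟩
    rw [e4] at e3
    have e4' : Module.finrank ℂ
        (⊤ : Submodule ℂ (EuclideanSpace ℂ (Fin r))) = r := by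
      simpa [finrank_euclideanSpace_fin] using
        (finrank_top ℂ (EuclideanSpace ℂ (Fin r)))
    have e3' : Module.finrank ℂ (EuclideanSpace ℂ (Fin m)) = m := finrank_euclideanSpace_fin
    have e5 := LinearMap.finrank_range_add_finrank_ker g
    have e5' : Module.finrank ℂ (EuclideanSpace ℂ (Fin r)) = r := finrank_euclideanSpace_fin
    have e6 : Module.finrank ℂ (LinearMap.range g)
        ≤ Module.finrank ℂ (LinearMap.ker (Matrix.toEuclideanLin Urᴴ)) :=
      Submodule.finrank_mono hsubg
    have e7 := Submodule.finrank_sup_add_finrank_inf_eq (LinearMap.ker f) (LinearMap.ker g)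
    have e8 : Module.finrank ℂ
        ((LinearMap.ker f ⊔ LinearMap.ker g : Submodule ℂ (EuclideanSpace ℂ (Fin r)))) ≤ r := by
      simpa [finrank_euclideanSpace_fin] using
        (Submodule.finrank_le (LinearMap.ker f ⊔ LinearMap.ker g :
          Submodule ℂ (EuclideanSpace ℂ (Fin r))))
    set Y := (LinearMap.ker f ⊓ LinearMap.ker g : Submodule ℂ (EuclideanSpace ℂ (Fin r)))
      with hY
    set V := Submodule.map (Matrix.toEuclideanLin Vr) Y with hV
    have hVrank : Module.finrank ℂ V = Module.finrank ℂ Y := hmapr Y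
    refine sv_upper (A + E) τ hτ hτpos W hWW hAE ⟨m + n - 2*r + i, by omega⟩
      ((1 + k) * σ iF) V (by rw [hVrank]; simp only [Fin.val_mk]; omega) ?_
    intro x hx
    obtain ⟨y, hyY, rfl⟩ := Submodule.mem_map.mp hx
    obtain ⟨hyf, hyg⟩ := Submodule.mem_inf.mp hyY
    set z := Matrix.toEuclideanLin (Km * Dm) y with hz
    set x₀ := Matrix.toEuclideanLin Dm y with hx₀
    have hzKx : z = x₀ + Matrix.toEuclideanLin Fm x₀ := by
      rw [hz, tl_mul, hKm, tl_add, tl_one, hx₀]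
    have hz0 : ∀ l : Fin r, l.val < i → z l = 0 := by
      intro l hl
      have hm0 := LinearMap.mem_ker.mp hyf
      have h5 := congrFun hm0 (⟨l.val, hl⟩ : Fin i)
      have h6 : z (⟨l.val, lt_trans hl hin1⟩ : Fin r) = 0 := by
        simpa [hf, selLM_apply, hz] using h5
      have h7 : (⟨l.val, lt_trans hl hin1⟩ : Fin r) = l := Fin.ext rfl
      rwa [h7] at h6
    have hNy : Matrix.toEuclideanLin Nm y = 0 := LinearMap.mem_ker.mp hyg
    have hm3 : (A + E) * Vr = Ur * (Dm * (Km * Dm)) + Nm := by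
      rw [hDKD, hNm, Matrix.add_mul, hAVr, Matrix.mul_add]
      abel
    have e9 : Matrix.toEuclideanLin (A + E) (Matrix.toEuclideanLin Vr y)
        = Matrix.toEuclideanLin Ur (Matrix.toEuclideanLin Dm z) := by
      rw [← tl_mul, hm3, tl_add, hNy, add_zero, tl_mul, tl_mul, ← hz]
    have hnx : ‖Matrix.toEuclideanLin Vr y‖ = ‖y‖ := tl_isometry hVr y
    set fz := Matrix.toEuclideanLin Fm x₀ with hfz
    set pb : EuclideanSpace ℂ (Fin r) := WithLp.toLp 2 (fun l => if l.val < i then 0 else x₀ l) with hpb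
    set fzhi : EuclideanSpace ℂ (Fin r) := WithLp.toLp 2 (fun l => if l.val < i then 0 else fz l) with hfzhi
    have hzsplit : z = pb + fzhi := by
      ext l
      show z l = pb l + fzhi l
      by_cases hl : l.val < i
      · rw [hz0 l hl, hpb, hfzhi]
        simp [hl]
      · rw [hzKx]
        show x₀ l + fz l = _
        rw [hpb, hfzhi]
        simp [hl]
    have hnorm_split : ‖x₀‖^2
        = (∑ l, ‖(if l.val < i then x₀ l else 0 : ℂ)‖^2) + ‖pb‖^2 := by
      rw [eu_norm_sq x₀, eu_norm_sq pb, ← Finset.sum_add_distrib]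
      refine Finset.sum_congr rfl fun l _ => ?_
      by_cases hl : l.val < i <;> simp [hpb, hl]
    have hpa_eq : ∀ l : Fin r, l.val < i → x₀ l = -(fz l) := by
      intro l hl
      have h1 := hz0 l hl
      rw [hzKx] at h1
      have h2 : x₀ l + fz l = 0 := h1
      linear_combination h2
    have hfz_le : ‖fz‖ ≤ k * ‖x₀‖ := hFb x₀
    have hsplit_fz : ‖fz‖^2
        = (∑ l, ‖(if l.val < i then fz l else 0 : ℂ)‖^2) + ‖fzhi‖^2 := by
      rw [eu_norm_sq fz, eu_norm_sq fzhi, ← Finset.sum_add_distrib]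
      refine Finset.sum_congr rfl fun l _ => ?_
      by_cases hl : l.val < i <;> simp [hfzhi, hl]
    have hpa_norm : (∑ l, ‖(if l.val < i then x₀ l else 0 : ℂ)‖^2)
        = (∑ l, ‖(if l.val < i then fz l else 0 : ℂ)‖^2) := by
      refine Finset.sum_congr rfl fun l _ => ?_
      by_cases hl : l.val < i
      · simp only [hl, if_true]
        rw [hpa_eq l hl, norm_neg]
      · simp [hl]
    have hSpa0 : (0:ℝ) ≤ ∑ l, ‖(if l.val < i then x₀ l else 0 : ℂ)‖^2 :=
      Finset.sum_nonneg fun l _ => sq_nonneg _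
    have hfzhi_sq : ‖fzhi‖^2 ≤ k^2 * ‖pb‖^2 := by
      have h1 : ‖fz‖^2 ≤ k^2 * ‖x₀‖^2 := by nlinarith [norm_nonneg fz, norm_nonneg x₀]
      have h3 : k^2 * ‖x₀‖^2 = k^2 * (∑ l, ‖(if l.val < i then x₀ l else 0 : ℂ)‖^2)
          + k^2 * ‖pb‖^2 := by rw [hnorm_split]; ring
      have h4 : (k^2 - 1) * (∑ l, ‖(if l.val < i then x₀ l else 0 : ℂ)‖^2) ≤ 0 :=
        mul_nonpos_iff.mpr (Or.inr ⟨by nlinarith, hSpa0⟩)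
      linarith [hsplit_fz, hpa_norm]
    have hfzhi_le : ‖fzhi‖ ≤ k * ‖pb‖ :=
      sq_le_of_sq (norm_nonneg _) (mul_nonneg hk0 (norm_nonneg _)) (by rw [mul_pow]; exact hfzhi_sq)
    have hz_le : ‖z‖ ≤ (1 + k) * ‖pb‖ := by
      calc ‖z‖ ≤ ‖pb‖ + ‖fzhi‖ := by rw [hzsplit]; exact norm_add_le _ _
        _ ≤ ‖pb‖ + k * ‖pb‖ := by linarith
        _ = (1+k) * ‖pb‖ := by ring
    have hpb_le : ‖pb‖ ≤ Real.sqrt (σ iF) * ‖y‖ := by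
      refine sq_le_of_sq (norm_nonneg _) (mul_nonneg (hsq iF).le (norm_nonneg _)) ?_
      rw [mul_pow, Real.sq_sqrt (hσpos iF).le, eu_norm_sq pb, eu_norm_sq y, Finset.mul_sum]
      refine Finset.sum_le_sum fun l _ => ?_
      by_cases hl : l.val < i
      · simp only [hpb, hl, if_true]
        have : (0:ℝ) ≤ σ iF * ‖y l‖^2 := mul_nonneg (hσpos iF).le (sq_nonneg _)
        simpa using this
      · simp only [hpb, hl, if_false]
        have hx0l : ‖x₀ l‖ = Real.sqrt (σ l) * ‖y l‖ := hDmc y l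
        have hil : σ l ≤ σ iF := hσ (by rw [Fin.le_def]; simp [hiF]; omega)
        rw [hx0l, mul_pow, Real.sq_sqrt (hσpos l).le]
        exact mul_le_mul_of_nonneg_right hil (sq_nonneg _)
    have hDz_le : ‖Matrix.toEuclideanLin Dm z‖ ≤ Real.sqrt (σ iF) * ‖z‖ := by
      refine sq_le_of_sq (norm_nonneg _) (mul_nonneg (hsq iF).le (norm_nonneg _)) ?_
      rw [mul_pow, Real.sq_sqrt (hσpos iF).le, eu_norm_sq (Matrix.toEuclideanLin Dm z),
        eu_norm_sq z, Finset.mul_sum]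
      refine Finset.sum_le_sum fun l _ => ?_
      rw [hDmc z l, mul_pow, Real.sq_sqrt (hσpos l).le]
      by_cases hl : l.val < i
      · rw [hz0 l hl]
        simp
      · have hil : σ l ≤ σ iF := hσ (by rw [Fin.le_def]; simp [hiF]; omega)
        exact mul_le_mul_of_nonneg_right hil (sq_nonneg _)
    calc ‖Matrix.toEuclideanLin (A + E) (Matrix.toEuclideanLin Vr y)‖
        = ‖Matrix.toEuclideanLin Dm z‖ := by rw [e9, tl_isometry hUr]
      _ ≤ Real.sqrt (σ iF) * ‖z‖ := hDz_le
      _ ≤ Real.sqrt (σ iF) * ((1 + k) * ‖pb‖) :=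
          mul_le_mul_of_nonneg_left hz_le (Real.sqrt_nonneg _)
      _ ≤ Real.sqrt (σ iF) * ((1 + k) * (Real.sqrt (σ iF) * ‖y‖)) :=
          mul_le_mul_of_nonneg_left
            (mul_le_mul_of_nonneg_left hpb_le (by linarith)) (Real.sqrt_nonneg _)
      _ = (1 + k) * σ iF * ‖y‖ := by
          rw [show Real.sqrt (σ iF) * ((1 + k) * (Real.sqrt (σ iF) * ‖y‖))
            = (1 + k) * (Real.sqrt (σ iF) * Real.sqrt (σ iF)) * ‖y‖ from by ring, hss iF]
      _ = (1 + k) * σ iF * ‖Matrix.toEuclideanLin Vr y‖ := by rw [hnx]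
  · -- Part 2 : lower bounds
    intro i
    set embB : Fin (r - 1 - i.val) → Fin r :=
      (fun l => ⟨i.val + 1 + l.val, by have := l.isLt; have := i.isLt; omega⟩) with hembB
    set ψ := (selLM embB).comp
      (LinearMap.id : EuclideanSpace ℂ (Fin r) →ₗ[ℂ] EuclideanSpace ℂ (Fin r)) with hψ
    have hkerY := ker_sel_finrank
      (LinearMap.id : EuclideanSpace ℂ (Fin r) →ₗ[ℂ] EuclideanSpace ℂ (Fin r)) embB
    rw [← hψ] at hkerY
    set Y := LinearMap.ker ψ with hY
    set V := Submodule.map (Matrix.toEuclideanLin Vr) Y with hV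
    have hVrank : Module.finrank ℂ V = Module.finrank ℂ Y := hmapr Y
    have hiv := i.isLt
    refine sv_lower (A + E) τ hτ hτpos W hWW hAE ⟨i.val, by omega⟩
      ((1 - k) * σ i) V (by rw [hVrank]; simp only [Fin.val_mk]; omega) ?_
    intro x hx
    obtain ⟨y, hyY, rfl⟩ := Submodule.mem_map.mp hx
    have hysupp : ∀ l : Fin r, i.val < l.val → y l = 0 := by
      intro l hl
      have hm0 := LinearMap.mem_ker.mp hyY
      have h5 := congrFun hm0 (⟨l.val - i.val - 1, by have := l.isLt; omega⟩
        : Fin (r - 1 - i.val))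
      have h7 : embB (⟨l.val - i.val - 1, by have := l.isLt; omega⟩ : Fin (r - 1 - i.val))
          = l := by
        rw [hembB]; exact Fin.ext (by simp; omega)
      have h6 : y l = 0 := by
        rw [← h7]
        simpa [hψ, selLM_apply] using h5
      exact h6
    set z := Matrix.toEuclideanLin Dm y with hzd
    have hzsupp : ∀ l : Fin r, i.val < l.val → z l = 0 := by
      intro l hl
      rw [hzd, hDm, tl_diag, hysupp l hl, mul_zero]
    set v := Matrix.toEuclideanLin Km z with hv
    have hvz : v = z + Matrix.toEuclideanLin Fm z := by
      rw [hv, hKm, tl_add, tl_one]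
    set w : EuclideanSpace ℂ (Fin r) := WithLp.toLp 2 (fun l => if l ≤ i then v l else 0) with hw
    set u₀ := Matrix.toEuclideanLin Di w with hu₀
    have hm1 : Urᴴ * (A + E) * Vr = Dm * (Km * Dm) := by
      rw [Matrix.mul_assoc, Matrix.add_mul, hAVr, Matrix.mul_add, hDKD]
      rw [show Urᴴ * (Ur * Sgm) = (Urᴴ * Ur) * Sgm from by simp only [Matrix.mul_assoc], hUr,
        Matrix.one_mul]
      congr 1
      rw [hM, Matrix.mul_assoc]
    have e1 : Matrix.toEuclideanLin Urᴴ
        (Matrix.toEuclideanLin (A + E) (Matrix.toEuclideanLin Vr y))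
        = Matrix.toEuclideanLin Dm v := by
      rw [← tl_mul, ← tl_mul, hm1, tl_mul, tl_mul, ← hzd, ← hv]
    have hz_lb : Real.sqrt (σ i) * ‖y‖ ≤ ‖z‖ := by
      refine sq_le_of_sq (mul_nonneg (Real.sqrt_nonneg _) (norm_nonneg _)) (norm_nonneg _) ?_
      rw [mul_pow, Real.sq_sqrt (hσpos i).le, eu_norm_sq y, eu_norm_sq z, Finset.mul_sum]
      refine Finset.sum_le_sum fun l _ => ?_
      rw [hDmc y l, mul_pow, Real.sq_sqrt (hσpos l).le]
      by_cases hl : i.val < l.val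
      · rw [hysupp l hl]
        simp
      · have hil : σ i ≤ σ l := hσ (by rw [Fin.le_def]; omega)
        exact mul_le_mul_of_nonneg_right hil (sq_nonneg _)
    set pfz : EuclideanSpace ℂ (Fin r) :=
      WithLp.toLp 2 (fun l => if l ≤ i then Matrix.toEuclideanLin Fm z l else 0) with hpfz
    have hw_eq : w = z + pfz := by
      ext l
      show w l = z l + pfz l
      by_cases hl : l ≤ i
      · show (if l ≤ i then v l else 0) = z l + (if l ≤ i then Matrix.toEuclideanLin Fm z l else 0)
        rw [if_pos hl, if_pos hl]
        exact congrArg (fun t : EuclideanSpace ℂ (Fin r) => t l) hvz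
      · have hvl : i.val < l.val := by
          rw [Fin.le_def, not_le] at hl
          exact hl
        show (if l ≤ i then v l else 0) = z l + (if l ≤ i then Matrix.toEuclideanLin Fm z l else 0)
        rw [if_neg hl, if_neg hl, hzsupp l hvl, add_zero]
    have hpfz_le : ‖pfz‖ ≤ k * ‖z‖ := by
      refine sq_le_of_sq (norm_nonneg _) (mul_nonneg hk0 (norm_nonneg _)) ?_
      have h1 : ‖pfz‖^2 ≤ ‖Matrix.toEuclideanLin Fm z‖^2 := by
        rw [eu_norm_sq pfz, eu_norm_sq (Matrix.toEuclideanLin Fm z)]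
        refine Finset.sum_le_sum fun l _ => ?_
        have hple : ‖pfz l‖ ≤ ‖Matrix.toEuclideanLin Fm z l‖ := by
          show ‖(if l ≤ i then Matrix.toEuclideanLin Fm z l else 0)‖ ≤ _
          by_cases hl : l ≤ i
          · rw [if_pos hl]
          · rw [if_neg hl, norm_zero]
            exact norm_nonneg _
        exact pow_le_pow_left₀ (norm_nonneg _) hple 2
      have h2 := hFb z
      have h3 : ‖Matrix.toEuclideanLin Fm z‖^2 ≤ (k * ‖z‖)^2 :=
        pow_le_pow_left₀ (norm_nonneg _) h2 2
      calc ‖pfz‖^2 ≤ ‖Matrix.toEuclideanLin Fm z‖^2 := h1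
        _ ≤ (k * ‖z‖)^2 := h3
    have hw_lb : (1 - k) * ‖z‖ ≤ ‖w‖ := by
      have h1 : ‖z‖ ≤ ‖w‖ + ‖pfz‖ := by
        have h2 : z = w - pfz := by rw [hw_eq]; abel
        calc ‖z‖ = ‖w - pfz‖ := by rw [h2]
          _ ≤ ‖w‖ + ‖pfz‖ := norm_sub_le _ _
      nlinarith [norm_nonneg z]
    have hu_le : Real.sqrt (σ i) * ‖u₀‖ ≤ ‖w‖ := by
      refine sq_le_of_sq (mul_nonneg (Real.sqrt_nonneg _) (norm_nonneg _)) (norm_nonneg _) ?_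
      rw [mul_pow, Real.sq_sqrt (hσpos i).le, eu_norm_sq u₀, eu_norm_sq w, Finset.mul_sum]
      refine Finset.sum_le_sum fun l _ => ?_
      rw [hu₀, hDic w l, mul_pow, inv_pow, Real.sq_sqrt (hσpos l).le]
      by_cases hl : l ≤ i
      · have hil : σ i ≤ σ l := hσ hl
        have h1 : σ i * (σ l)⁻¹ ≤ 1 := by
          calc σ i * (σ l)⁻¹ ≤ σ l * (σ l)⁻¹ :=
                mul_le_mul_of_nonneg_right hil (inv_nonneg.mpr (hσpos l).le)
            _ = 1 := mul_inv_cancel₀ (hσpos l).ne'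
        calc σ i * ((σ l)⁻¹ * ‖w l‖^2) = (σ i * (σ l)⁻¹) * ‖w l‖^2 := by ring
          _ ≤ 1 * ‖w l‖^2 := mul_le_mul_of_nonneg_right h1 (sq_nonneg _)
          _ = ‖w l‖^2 := one_mul _
      · have hwl : w l = 0 := by
          show (if l ≤ i then v l else 0) = 0
          rw [if_neg hl]
        rw [hwl]
        simp
    have hinner : (inner ℂ u₀ (Matrix.toEuclideanLin Dm v) : ℂ) = ((‖w‖^2 : ℝ) : ℂ) := by
      rw [eu_inner_sum]
      have hterm : ∀ l : Fin r,
          starRingEnd ℂ (u₀ l) * (Matrix.toEuclideanLin Dm v l)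
            = starRingEnd ℂ (w l) * w l := by
        intro l
        by_cases hl : l ≤ i
        · have hwl : w l = v l := by
            show (if l ≤ i then v l else 0) = v l
            rw [if_pos hl]
          rw [hu₀, hDi, tl_diag, hDm, tl_diag, hwl]
          have hne : ((Real.sqrt (σ l) : ℝ) : ℂ) ≠ 0 := by
            simpa using (hsq l).ne'
          rw [_root_.map_mul, map_inv₀, Complex.conj_ofReal]
          calc (((Real.sqrt (σ l) : ℝ) : ℂ))⁻¹ * starRingEnd ℂ (v l)
                * (((Real.sqrt (σ l) : ℝ) : ℂ) * v l)
              = (starRingEnd ℂ (v l) * v l)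
                * ((((Real.sqrt (σ l) : ℝ) : ℂ))⁻¹ * ((Real.sqrt (σ l) : ℝ) : ℂ)) := by ring
            _ = starRingEnd ℂ (v l) * v l := by rw [inv_mul_cancel₀ hne, mul_one]
        · have hwl : w l = 0 := by
            show (if l ≤ i then v l else 0) = 0
            rw [if_neg hl]
          rw [hu₀, hDi, tl_diag, hwl]
          simp
      have hterm2 : ∀ l : Fin r, starRingEnd ℂ (w l) * w l = ((‖w l‖^2 : ℝ) : ℂ) := by
        intro l
        rw [mul_comm, Complex.mul_conj, Complex.sq_norm]
      rw [Finset.sum_congr rfl (fun l _ => hterm l),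
        Finset.sum_congr rfl (fun l _ => hterm2 l), ← Complex.ofReal_sum, eu_norm_sq w]
    have hDmv_lb : Real.sqrt (σ i) * ‖w‖ ≤ ‖Matrix.toEuclideanLin Dm v‖ := by
      by_cases hw0 : w = 0
      · rw [hw0, norm_zero, mul_zero]
        exact norm_nonneg _
      · have h2 := norm_inner_le_norm (𝕜 := ℂ) u₀ (Matrix.toEuclideanLin Dm v)
        rw [hinner] at h2
        have h2' : ‖w‖^2 ≤ ‖u₀‖ * ‖Matrix.toEuclideanLin Dm v‖ := by
          rw [Complex.norm_real, Real.norm_eq_abs, abs_of_nonneg (sq_nonneg _)] at h2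
          exact h2
        have hwpos : 0 < ‖w‖ := norm_pos_iff.mpr hw0
        nlinarith [mul_le_mul_of_nonneg_right hu_le
            (norm_nonneg (Matrix.toEuclideanLin Dm v)),
          mul_le_mul_of_nonneg_left h2' (hsq i).le]
    have hnx : ‖Matrix.toEuclideanLin Vr y‖ = ‖y‖ := tl_isometry hVr y
    calc (1 - k) * σ i * ‖Matrix.toEuclideanLin Vr y‖
        = ((1 - k) * Real.sqrt (σ i)) * (Real.sqrt (σ i) * ‖y‖) := by
          rw [hnx, show ((1 - k) * Real.sqrt (σ i)) * (Real.sqrt (σ i) * ‖y‖)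
            = (1 - k) * (Real.sqrt (σ i) * Real.sqrt (σ i)) * ‖y‖ from by ring, hss i]
      _ ≤ ((1 - k) * Real.sqrt (σ i)) * ‖z‖ :=
          mul_le_mul_of_nonneg_left hz_lb (mul_nonneg (by linarith) (Real.sqrt_nonneg _))
      _ = Real.sqrt (σ i) * ((1 - k) * ‖z‖) := by ring
      _ ≤ Real.sqrt (σ i) * ‖w‖ := mul_le_mul_of_nonneg_left hw_lb (Real.sqrt_nonneg _)
      _ ≤ ‖Matrix.toEuclideanLin Dm v‖ := hDmv_lb
      _ = ‖Matrix.toEuclideanLin Urᴴ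
            (Matrix.toEuclideanLin (A + E) (Matrix.toEuclideanLin Vr y))‖ := by rw [e1]
      _ ≤ ‖Matrix.toEuclideanLin (A + E) (Matrix.toEuclideanLin Vr y)‖ := tl_contract hUr _
end
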